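/- arXiv:2507.04257 — 5 statements merged into one kernel-verified Lean document; each statement's English description precedes it below -/
import Mathlib

section
/- Let 𝓗 be a finite nonempty family of finite simple graphs with γ_𝓗 ≥ 1, and let n ≥ γ_𝓗 be an integer. Then the generalized book B_{γ_𝓗, n−γ_𝓗} is 𝓗-subdivision-free. -/
/-!
The first `γ` vertices of `B_{γ,t}` form a vertex cover `K`. Suppose a graph with a vertex cover
`K` contains a subdivision of `H`. An edge of `H` whose two branch vertices lie outside `K` must be
subdivided, and the vertex after the first branch vertex on its path is a non-branch vertex in `K`;
internal disjointness makes these vertices distinct for distinct edges. So the branch vertices in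
`K` together with the edges of `H` among the remaining branch vertices number at most `|K|`, and
deleting one end of each such edge leaves an independent set. Hence `|H| ≤ α(H) + |K|`, which
is impossible when `|K| = γ_𝓗 ≤ γ_H = |H| - α(H) - 1`.
-/

open Matrix

namespace SubdivPaper

/-- A vertex set is independent in `G`. -/
def IsIndep {V : Type*} (G : SimpleGraph V) (s : Set V) : Prop :=
  s.Pairwise fun u v => ¬ G.Adj u v

/-- The independence number `α(G)` of a finite graph `G`. -/
noncomputable def indepNum {V : Type*} [Fintype V] (G : SimpleGraph V) : ℕ :=
  sSup {k : ℕ | ∃ s : Finset V, IsIndep G ↑s ∧ s.card = k}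

/-- `γ_H := |V(H)| - α(H) - 1`. -/
noncomputable def gammaOf {V : Type*} [Fintype V] (G : SimpleGraph V) : ℕ :=
  Fintype.card V - indepNum G - 1

/-- The set of internal vertices of a walk (support minus the two endpoints). -/
def WalkInternal {V : Type*} {G : SimpleGraph V} {a b : V} (p : G.Walk a b) : Set V :=
  {w | w ∈ p.support ∧ w ≠ a ∧ w ≠ b}

/-- `G` contains a subdivision of `H`: there are an injective map `φ` on vertices and,
for each edge `uv` of `H`, a path in `G` joining `φ u` and `φ v`, such that these paths are
pairwise internally vertex-disjoint and no internal vertex lies in the image of `φ`. -/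
def ContainsSubdiv {V W : Type*} (G : SimpleGraph V) (H : SimpleGraph W) : Prop :=
  ∃ φ : W → V, Function.Injective φ ∧
    ∃ P : ∀ ⦃u v : W⦄, H.Adj u v → G.Walk (φ u) (φ v),
      (∀ ⦃u v : W⦄ (h : H.Adj u v), (P h).IsPath) ∧
      (∀ ⦃u v : W⦄ (h : H.Adj u v), P h.symm = (P h).reverse) ∧
      (∀ ⦃u v : W⦄ (h : H.Adj u v), ∀ w ∈ WalkInternal (P h), w ∉ Set.range φ) ∧
      (∀ ⦃u v u' v' : W⦄ (h : H.Adj u v) (h' : H.Adj u' v'),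
        s(u, v) ≠ s(u', v') → WalkInternal (P h) ∩ WalkInternal (P h') = ∅)

variable {ι : Type*}

/-- `G` is `𝓗`-subdivision-free. -/
def SubdivFreeFam (m : ι → ℕ) (ℋ : ∀ i, SimpleGraph (Fin (m i)))
    {V : Type*} (G : SimpleGraph V) : Prop :=
  ∀ i, ¬ ContainsSubdiv G (ℋ i)

/-- `γ_𝓗 := min_{H ∈ 𝓗} γ_H`. -/
noncomputable def gammaFam (m : ι → ℕ) (ℋ : ∀ i, SimpleGraph (Fin (m i))) : ℕ :=
  sInf {g : ℕ | ∃ i, gammaOf (ℋ i) = g}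

open Classical in
/-- The real adjacency matrix of a graph on `Fin n`. -/
noncomputable def adjMat {n : ℕ} (G : SimpleGraph (Fin n)) : Matrix (Fin n) (Fin n) ℝ :=
  Matrix.of fun u v => if G.Adj u v then (1 : ℝ) else 0

/-- The spectral radius: the largest eigenvalue of the adjacency matrix. -/
noncomputable def specRad {n : ℕ} (G : SimpleGraph (Fin n)) : ℝ :=
  sSup {t : ℝ | ∃ x : Fin n → ℝ, x ≠ 0 ∧ adjMat G *ᵥ x = t • x}

/-- `spex(n, 𝓗_sub)`. -/
noncomputable def spex (n : ℕ) (m : ι → ℕ) (ℋ : ∀ i, SimpleGraph (Fin (m i))) : ℝ :=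
  sSup {ρ : ℝ | ∃ G : SimpleGraph (Fin n), SubdivFreeFam m ℋ G ∧ specRad G = ρ}

/-- `SPEX(n, 𝓗_sub)`: the `n`-vertex `𝓗`-subdivision-free graphs of maximum spectral radius. -/
def SPEX (n : ℕ) (m : ι → ℕ) (ℋ : ∀ i, SimpleGraph (Fin (m i))) :
    Set (SimpleGraph (Fin n)) :=
  {G | SubdivFreeFam m ℋ G ∧
    ∀ G' : SimpleGraph (Fin n), SubdivFreeFam m ℋ G' → specRad G' ≤ specRad G}

/-- The generalized book `B_{s,t} = K_s ∨ (t K_1)`. -/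
def book (s t : ℕ) : SimpleGraph (Fin (s + t)) :=
  SimpleGraph.fromRel fun u v => (u : ℕ) < s ∨ (v : ℕ) < s

/-- `G` contains a spanning subgraph isomorphic to `B`. -/
def HasSpanningSubgraphIso {V W : Type*} (G : SimpleGraph V) (B : SimpleGraph W) : Prop :=
  ∃ f : W ≃ V, ∀ u v : W, B.Adj u v → G.Adj (f u) (f v)

/-- The graph obtained from `G` by adding the edge `uv`. -/
def addEdge {V : Type*} (G : SimpleGraph V) (u v : V) : SimpleGraph V :=
  G ⊔ SimpleGraph.fromEdgeSet {s(u, v)}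

/-- `G` is `𝓗`-subdivision-saturated. -/
def SubdivSatFam (m : ι → ℕ) (ℋ : ∀ i, SimpleGraph (Fin (m i)))
    {V : Type*} (G : SimpleGraph V) : Prop :=
  SubdivFreeFam m ℋ G ∧
    ∀ u v : V, u ≠ v → ¬ G.Adj u v → ∃ i, ContainsSubdiv (addEdge G u v) (ℋ i)

/-- `max_{H ∈ 𝓗} |V(H)|`. -/
noncomputable def maxOrderFam (m : ι → ℕ) : ℕ := sSup (Set.range m)

/-- The minimum order of a graph `H ∈ 𝓗` with `γ_H = γ_𝓗` (the order of a minimal graph). -/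
noncomputable def minOrderAtGamma (m : ι → ℕ) (ℋ : ∀ i, SimpleGraph (Fin (m i))) : ℕ :=
  sInf {k : ℕ | ∃ i, gammaOf (ℋ i) = gammaFam m ℋ ∧ m i = k}

/-- `α_𝓗`: the independence number of a minimal graph with respect to `𝓗`. -/
noncomputable def alphaFam (m : ι → ℕ) (ℋ : ∀ i, SimpleGraph (Fin (m i))) : ℕ :=
  minOrderAtGamma m ℋ - gammaFam m ℋ - 1

/-- `S'' = {v ∉ L : L ⊆ N_G(v)}`. -/
def Sdd {n : ℕ} (G : SimpleGraph (Fin n)) (L : Finset (Fin n)) : Set (Fin n) :=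
  {v | v ∉ L ∧ ∀ w ∈ L, G.Adj w v}

/-- `S' = (V ∖ L) ∖ S''`. -/
def Sd {n : ℕ} (G : SimpleGraph (Fin n)) (L : Finset (Fin n)) : Set (Fin n) :=
  {v | v ∉ L ∧ ¬ ∀ w ∈ L, G.Adj w v}

/-- `L^λ = {u : x_u ≥ (10 C)^{-λ} x_{u*}}`. -/
def Lset {n : ℕ} (x : Fin n → ℝ) (u₀ : Fin n) (C : ℝ) (lam : ℕ) : Set (Fin n) :=
  {u | ((10 * C) ^ lam)⁻¹ * x u₀ ≤ x u}

/-- `N_i(u)`: vertices at distance exactly `i` from `u`. -/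
def Nset {n : ℕ} (G : SimpleGraph (Fin n)) (u : Fin n) (i : ℕ) : Set (Fin n) :=
  {v | G.dist u v = i}

/-- `H[S] ∈ Γ_s(H)` is irreducible: `|S| = s` and no `s`-vertex induced subgraph of `H` is
isomorphic to a proper subgraph of `H[S]`. -/
def IrreducibleInduced {h : ℕ} (H : SimpleGraph (Fin h)) (s : ℕ) (S : Finset (Fin h)) : Prop :=
  S.card = s ∧
    ¬ ∃ (T : Finset (Fin h)) (B' : SimpleGraph ((S : Set (Fin h)))),
        T.card = s ∧ B' ≤ SimpleGraph.induce (S : Set (Fin h)) H ∧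
        B' ≠ SimpleGraph.induce (S : Set (Fin h)) H ∧
        Nonempty (SimpleGraph.induce (T : Set (Fin h)) H ≃g B')

/-- `Q` is `Γ(𝓗)`-subdivision-free. -/
def GammaFree (m : ι → ℕ) (ℋ : ∀ i, SimpleGraph (Fin (m i)))
    {X : Type*} (Q : SimpleGraph X) : Prop :=
  ∀ (i : ι) (S : Finset (Fin (m i))),
    IrreducibleInduced (ℋ i) (m i - gammaFam m ℋ) S →
    ¬ ContainsSubdiv Q (SimpleGraph.induce (S : Set (Fin (m i))) (ℋ i))

/-- `Q` is `Γ(𝓗)`-subdivision-saturated. -/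
def GammaSat (m : ι → ℕ) (ℋ : ∀ i, SimpleGraph (Fin (m i)))
    {X : Type*} (Q : SimpleGraph X) : Prop :=
  GammaFree m ℋ Q ∧
    ∀ u v : X, u ≠ v → ¬ Q.Adj u v →
      ∃ (i : ι) (S : Finset (Fin (m i))),
        IrreducibleInduced (ℋ i) (m i - gammaFam m ℋ) S ∧
        ContainsSubdiv (addEdge Q u v) (SimpleGraph.induce (S : Set (Fin (m i))) (ℋ i))

/-- `G` is `{H}`-subdivision-saturated (single forbidden graph). -/
def SubdivSatSingle {W V : Type*} (H : SimpleGraph W) (G : SimpleGraph V) : Prop :=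
  ¬ ContainsSubdiv G H ∧
    ∀ u v : V, u ≠ v → ¬ G.Adj u v → ContainsSubdiv (addEdge G u v) H

open Finset

lemma card_le_indepNum {W : Type*} [Fintype W] {H : SimpleGraph W} {s : Finset W}
    (hs : IsIndep H s) : #s ≤ indepNum H :=
  le_csSup ⟨Fintype.card W, by rintro _ ⟨t, -, rfl⟩; exact t.card_le_univ⟩ ⟨s, hs, rfl⟩

lemma card_le_indepNum_add_card {W : Type*} [Fintype W] [DecidableEq W] {H : SimpleGraph W}
    (D : Finset W) (F : Finset (Sym2 W))
    (hF : ∀ ⦃u v⦄, u ∈ D → v ∈ D → H.Adj u v → s(u, v) ∈ F) :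
    #D ≤ indepNum H + #F := by
  set R := F.image fun e => e.out.1
  have hindep : IsIndep H ↑(D \ R) := by
    intro u hu v hv _ huv
    simp only [coe_sdiff, Set.mem_sdiff, mem_coe] at hu hv
    have hR : (s(u, v)).out.1 ∈ R := mem_image_of_mem _ (hF hu.1 hv.1 huv)
    rcases Sym2.mem_iff.1 (Sym2.out_fst_mem s(u, v)) with h | h <;> rw [h] at hR
    · exact hu.2 hR
    · exact hv.2 hR
  calc #D ≤ #(D \ R) + #R := card_le_card_sdiff_add_card
    _ ≤ indepNum H + #F := add_le_add (card_le_indepNum hindep) card_image_le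

lemma exists_adj_mem_walkInternal {V : Type*} {G : SimpleGraph V} {a b : V} (p : G.Walk a b)
    (hne : a ≠ b) (hab : ¬ G.Adj a b) : ∃ w, G.Adj a w ∧ w ∈ WalkInternal p := by
  cases p with
  | nil => exact absurd rfl hne
  | cons h _ => exact ⟨_, h, by simp, h.ne.symm, fun hb => hab (hb ▸ h)⟩

theorem card_le_indepNum_add_card_of_containsSubdiv {V W : Type*} [Fintype W]
    {G : SimpleGraph V} {H : SimpleGraph W} {K : Finset V} (hK : G.IsVertexCover K)
    (hGH : ContainsSubdiv G H) : Fintype.card W ≤ indepNum H + #K := by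
  classical
  obtain ⟨φ, hφ, P, -, -, hext, hdisj⟩ := hGH
  set A := univ.filter fun u => φ u ∈ K
  set D := univ.filter fun u => φ u ∉ K
  set E := H.edgeFinset.filter fun e => ∀ u ∈ e, u ∈ D
  have hE : #E ≤ #(K.filter (· ∉ Set.range φ)) := by
    refine card_le_card_of_forall_subsingleton
      (fun e w => ∃ u v, ∃ h : H.Adj u v, e = s(u, v) ∧ w ∈ WalkInternal (P h)) ?_ ?_
    · rintro ⟨u, v⟩ he
      simp only [E, D, mem_filter, SimpleGraph.mem_edgeFinset, SimpleGraph.mem_edgeSet,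
        Sym2.mem_iff, forall_eq_or_imp, forall_eq, mem_univ, true_and] at he
      obtain ⟨huv, hu, hv⟩ := he
      have hnadj : ¬ G.Adj (φ u) (φ v) := fun h => (hK h).elim hu hv
      obtain ⟨w, hw, hwP⟩ := exists_adj_mem_walkInternal (P huv) (hφ.ne huv.ne) hnadj
      exact ⟨w, mem_filter.2 ⟨(hK hw).resolve_left hu, hext huv w hwP⟩, u, v, huv, rfl, hwP⟩
    · rintro w - e₁ ⟨-, u, v, h, rfl, hw⟩ e₂ ⟨-, u', v', h', rfl, hw'⟩
      by_contra hne
      exact (hdisj h h' hne).subset ⟨hw, hw'⟩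
  have hA : #A ≤ #(K.filter (· ∈ Set.range φ)) :=
    card_le_card_of_injOn φ (fun u hu => by simp_all [A]) hφ.injOn
  have hD : #D ≤ indepNum H + #E := card_le_indepNum_add_card D E fun u v hu hv huv => by
    simp [E, huv, hu, hv]
  have hKsplit := card_filter_add_card_filter_not (s := K) (p := (· ∈ Set.range φ))
  have hWsplit : #A + #D = Fintype.card W := card_filter_add_card_filter_not _
  omega

lemma book_isVertexCover (s t : ℕ) :
    (book s t).IsVertexCover ↑(univ.filter fun v : Fin (s + t) => (v : ℕ) < s) := by
  intro u v huv
  simp only [book, SimpleGraph.fromRel_adj, coe_filter, mem_univ, true_and,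
    Set.mem_ofPred_eq] at huv ⊢
  tauto

theorem statement3_general {ι : Type*}
    (m : ι → ℕ) (ℋ : ∀ i, SimpleGraph (Fin (m i)))
    (hγ : 1 ≤ gammaFam m ℋ)
    (n : ℕ) :
    SubdivFreeFam m ℋ (book (gammaFam m ℋ) (n - gammaFam m ℋ)) := by
  intro i hsub
  have hcard := card_le_indepNum_add_card_of_containsSubdiv (book_isVertexCover _ _) hsub
  have hγi : gammaFam m ℋ ≤ gammaOf (ℋ i) := Nat.sInf_le ⟨i, rfl⟩
  rw [Fin.card_filter_val_lt] at hcard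
  simp only [gammaOf, Fintype.card_fin] at hcard hγi
  omega

theorem statement3 {ι : Type*} [Fintype ι] [Nonempty ι]
    (m : ι → ℕ) (ℋ : ∀ i, SimpleGraph (Fin (m i)))
    (hγ : 1 ≤ gammaFam m ℋ)
    (n : ℕ) (hn : gammaFam m ℋ ≤ n) :
    SubdivFreeFam m ℋ (book (gammaFam m ℋ) (n - gammaFam m ℋ)) :=
  statement3_general m ℋ hγ n

end SubdivPaper
end

section
/- Under the Setup, every v ∈ S' satisfies d_{S''}(v) ≤ max_{H∈𝓗} |V(H)| − 2, and every v ∈ S'' satisfies d_{S''}(v) ≤ α_𝓗. -/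
open Matrix

namespace SubdivPaper

variable {ι : Type*}

open SimpleGraph in
private lemma cons2_eq {V : Type*} {G : SimpleGraph V} {a m m' b : V} (e : m = m')
    (h1 : G.Adj a m) (h2 : G.Adj m b) (h1' : G.Adj a m') (h2' : G.Adj m' b) :
    (SimpleGraph.Walk.cons h1 (SimpleGraph.Walk.cons h2 SimpleGraph.Walk.nil) : G.Walk a b)
      = SimpleGraph.Walk.cons h1' (SimpleGraph.Walk.cons h2' SimpleGraph.Walk.nil) := by
  subst e; rfl

open SimpleGraph in
set_option maxHeartbeats 1000000 in
lemma containsSubdiv_of_mid {n h : ℕ} (G : SimpleGraph (Fin n)) (H : SimpleGraph (Fin h))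
    (φ : Fin h → Fin n) (hinj : Function.Injective φ)
    (M : Sym2 (Fin h) → Fin n)
    (hM : ∀ ⦃u w : Fin h⦄, H.Adj u w → ¬ G.Adj (φ u) (φ w) →
      G.Adj (φ u) (M s(u, w)) ∧ G.Adj (M s(u, w)) (φ w) ∧ M s(u, w) ∉ Set.range φ)
    (hMinj : ∀ ⦃u w u' w' : Fin h⦄, H.Adj u w → H.Adj u' w' →
      ¬ G.Adj (φ u) (φ w) → ¬ G.Adj (φ u') (φ w') → s(u, w) ≠ s(u', w') →
      M s(u, w) ≠ M s(u', w')) :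
    ContainsSubdiv G H := by
  classical
  refine ⟨φ, hinj, fun u w hh =>
    if had : G.Adj (φ u) (φ w) then Walk.cons had Walk.nil
    else Walk.cons (hM hh had).1 (Walk.cons (hM hh had).2.1 Walk.nil), ?_, ?_, ?_, ?_⟩
  · intro u w hh
    beta_reduce
    by_cases had : G.Adj (φ u) (φ w)
    · rw [dif_pos had]
      simp [Walk.cons_isPath_iff, (hinj.ne hh.ne)]
    · rw [dif_neg had]
      have h3 := (hM hh had).2.2
      have hmu : M s(u,w) ≠ φ u := fun e => h3 ⟨u, e.symm⟩
      have hmw : M s(u,w) ≠ φ w := fun e => h3 ⟨w, e.symm⟩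
      simp [Walk.cons_isPath_iff, Walk.support_cons, Walk.support_nil,
        (hinj.ne hh.ne), hmu.symm, hmw, Ne.symm hmw, hmu]
  · intro u w hh
    beta_reduce
    by_cases had : G.Adj (φ u) (φ w)
    · have had2 : G.Adj (φ w) (φ u) := had.symm
      rw [dif_pos had, dif_pos had2]
      rfl
    · have had2 : ¬ G.Adj (φ w) (φ u) := fun x => had x.symm
      rw [dif_neg had, dif_neg had2]
      exact cons2_eq (congrArg M Sym2.eq_swap) _ _ _ _
  · intro u w hh x hx
    beta_reduce at hx
    by_cases had : G.Adj (φ u) (φ w)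
    · rw [dif_pos had] at hx
      obtain ⟨hs, hxu, hxw⟩ := hx
      simp [Walk.support_cons, Walk.support_nil] at hs
      tauto
    · rw [dif_neg had] at hx
      obtain ⟨hs, hxu, hxw⟩ := hx
      simp [Walk.support_cons, Walk.support_nil] at hs
      have : x = M s(u,w) := by tauto
      rw [this]; exact (hM hh had).2.2
  · intro u w u' w' hh hh' hne
    ext x
    simp only [Set.mem_inter_iff, Set.mem_empty_iff_false, iff_false, not_and]
    intro hx hx'
    by_cases had : G.Adj (φ u) (φ w)
    · rw [dif_pos had] at hx
      obtain ⟨hs, hxu, hxw⟩ := hx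
      simp [Walk.support_cons, Walk.support_nil] at hs
      tauto
    · by_cases had' : G.Adj (φ u') (φ w')
      · rw [dif_pos had'] at hx'
        obtain ⟨hs, hxu, hxw⟩ := hx'
        simp [Walk.support_cons, Walk.support_nil] at hs
        tauto
      · rw [dif_neg had] at hx
        rw [dif_neg had'] at hx'
        obtain ⟨hs, hxu, hxw⟩ := hx
        obtain ⟨hs', hxu', hxw'⟩ := hx'
        simp [Walk.support_cons, Walk.support_nil] at hs hs'
        have e1 : x = M s(u,w) := by tauto
        have e2 : x = M s(u',w') := by tauto
        exact hMinj hh hh' had had' hne (e1 ▸ e2)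


open SimpleGraph Classical in
set_option maxHeartbeats 1000000 in
lemma build {n hn : ℕ} (G : SimpleGraph (Fin n)) (H : SimpleGraph (Fin hn))
    (A : Finset (Fin hn)) (hA : IsIndep H ↑A)
    (γ : ℕ) (hcard : A.card + γ + 1 = hn)
    (L : Finset (Fin n)) (hL : L.card = γ)
    (v : Fin n) (hvL : v ∉ L)
    (K : Finset (Fin n))
    (hKv : ∀ k ∈ K, G.Adj v k)
    (hKL : ∀ k ∈ K, ∀ l ∈ L, G.Adj l k)
    (hKnL : ∀ k ∈ K, k ∉ L)
    (hbig : ∀ l₁ ∈ L, ∀ l₂ ∈ L, l₁ ≠ l₂ →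
      hn * hn + hn + 1 ≤ (Finset.univ.filter (fun x => G.Adj l₁ x ∧ G.Adj l₂ x)).card)
    (hKcard : A.card + γ ≤ K.card ∨ (A.card ≤ K.card ∧ ∀ l ∈ L, G.Adj v l)) :
    ContainsSubdiv G H := by
  classical
  have hαK : A.card ≤ K.card := by
    rcases hKcard with h1 | h2
    · omega
    · exact h2.1
  obtain ⟨D, hDK, hDcard⟩ := Finset.exists_subset_card_eq hαK
  set T : Finset (Fin n) := insert v L with hT
  have hTcard : T.card = γ + 1 := by rw [hT, Finset.card_insert_of_notMem hvL, hL]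
  have hBcard : Aᶜ.card = γ + 1 := by
    rw [Finset.card_compl, Fintype.card_fin]; omega
  have e2 := Finset.equivOfCardEq (hDcard.symm : A.card = D.card)
  have e1 := Finset.equivOfCardEq (hBcard.trans hTcard.symm : Aᶜ.card = T.card)
  set φ : Fin hn → Fin n := fun x =>
    if hx : x ∈ A then (e2 ⟨x, hx⟩ : Fin n) else (e1 ⟨x, Finset.mem_compl.mpr hx⟩ : Fin n)
    with hφ
  have hφA : ∀ x (hx : x ∈ A), φ x ∈ D := by
    intro x hx; rw [hφ]; simp only [dif_pos hx]; exact (e2 ⟨x, hx⟩).2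
  have hφB : ∀ x (hx : x ∉ A), φ x ∈ T := by
    intro x hx; rw [hφ]; simp only [dif_neg hx]; exact (e1 ⟨x, Finset.mem_compl.mpr hx⟩).2
  have hKT : ∀ k ∈ K, k ∉ T := by
    intro k hk hkT
    rcases Finset.mem_insert.mp hkT with h | h
    · exact G.irrefl (h ▸ hKv k hk)
    · exact hKnL k hk h
  have hDT : ∀ d ∈ D, d ∉ T := fun d hd => hKT d (hDK hd)
  have hinj : Function.Injective φ := by
    intro x y e
    by_cases hx : x ∈ A <;> by_cases hy : y ∈ A
    · rw [hφ] at e; simp only [dif_pos hx, dif_pos hy] at e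
      exact congrArg Subtype.val (e2.injective (Subtype.ext e))
    · exact absurd (e ▸ hφA x hx) (fun h => hDT _ h (hφB y hy))
    · exact absurd (e ▸ hφB x hx) (fun h => hDT _ (hφA y hy) h)
    · rw [hφ] at e; simp only [dif_neg hx, dif_neg hy] at e
      exact congrArg Subtype.val (e1.injective (Subtype.ext e))
  have hdirect : ∀ ⦃u w : Fin hn⦄, H.Adj u w → u ∈ A → G.Adj (φ u) (φ w) := by
    intro u w huw hu
    have hw : w ∉ A := by
      intro hw
      exact hA (by exact_mod_cast hu) (by exact_mod_cast hw) (fun e => huw.ne e) huw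
    have h1 : φ u ∈ K := hDK (hφA u hu)
    rcases Finset.mem_insert.mp (hφB w hw) with h | h
    · rw [h]; exact (hKv _ h1).symm
    · exact (hKL _ h1 _ h).symm
  have hbadT : ∀ ⦃u w : Fin hn⦄, H.Adj u w → ¬ G.Adj (φ u) (φ w) →
      φ u ∈ T ∧ φ w ∈ T := by
    intro u w huw hne
    have hu : u ∉ A := fun hu => hne (hdirect huw hu)
    have hw : w ∉ A := fun hw => hne (hdirect huw.symm hw).symm
    exact ⟨hφB u hu, hφB w hw⟩
  -- edges needing a middle vertex
  set E : Finset (Sym2 (Fin hn)) :=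
    Finset.univ.filter (fun p => p ∈ H.edgeSet ∧ Sym2.map φ p ∉ G.edgeSet) with hE
  have hmemE : ∀ u w : Fin hn, (s(u, w) ∈ E ↔ H.Adj u w ∧ ¬ G.Adj (φ u) (φ w)) := by
    intro u w
    rw [hE, Finset.mem_filter]
    simp [Sym2.map_pair_eq, SimpleGraph.mem_edgeSet]
  have hEcard : E.card ≤ hn * hn + 1 := by
    calc E.card ≤ Finset.univ.card := Finset.card_le_card (Finset.subset_univ E)
    _ = Fintype.card (Sym2 (Fin hn)) := rfl
    _ = (Fintype.card (Fin hn) + 1).choose 2 := Sym2.card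
    _ = (hn + 1).choose 2 := by rw [Fintype.card_fin]
    _ = (hn + 1) * hn / 2 := by rw [Nat.choose_two_right, Nat.add_sub_cancel]
    _ ≤ hn * hn + 1 := by
        apply Nat.div_le_of_le_mul
        nlinarith
  -- available middles
  set CN : Sym2 (Fin hn) → Finset (Fin n) := Sym2.lift
    ⟨fun a b => (Finset.univ.filter (fun x => G.Adj (φ a) x ∧ G.Adj (φ b) x))
        \ Finset.image φ Finset.univ,
     fun a b => by
      beta_reduce
      rw [Finset.filter_and, Finset.filter_and, Finset.inter_comm]⟩ with hCN
  have hCNmk : ∀ a b : Fin hn, CN s(a, b) =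
      (Finset.univ.filter (fun x => G.Adj (φ a) x ∧ G.Adj (φ b) x))
        \ Finset.image φ Finset.univ := by
    intro a b; rw [hCN, Sym2.lift_mk]
  have himcard : (Finset.image φ Finset.univ).card ≤ hn := by
    calc (Finset.image φ Finset.univ).card ≤ (Finset.univ : Finset (Fin hn)).card :=
      Finset.card_image_le
    _ = hn := by simp
  -- reservoir for v-pairs
  set F : Finset (Fin n) := K \ Finset.image φ Finset.univ with hF
  have hKim : K ∩ Finset.image φ Finset.univ ⊆ D := by
    intro x hx
    obtain ⟨hxK, hxim⟩ := Finset.mem_inter.mp hx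
    obtain ⟨y, _, hy⟩ := Finset.mem_image.mp hxim
    by_cases hyA : y ∈ A
    · exact hy ▸ hφA y hyA
    · exact absurd (hy ▸ hφB y hyA) (hKT x hxK)
  have hFcard : K.card - A.card ≤ F.card := by
    have h1 : K ⊆ F ∪ (K ∩ Finset.image φ Finset.univ) := by
      intro x hx
      rcases _root_.em (x ∈ Finset.image φ Finset.univ) with him | him
      · exact Finset.mem_union.mpr (Or.inr (Finset.mem_inter.mpr ⟨hx, him⟩))
      · exact Finset.mem_union.mpr (Or.inl (Finset.mem_sdiff.mpr ⟨hx, him⟩))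
    have h2 := Finset.card_le_card h1
    have h3 := Finset.card_union_le F (K ∩ Finset.image φ Finset.univ)
    have h4 := Finset.card_le_card hKim
    omega
  -- v-pairs map to s(v, l)
  have hvpairL : ∀ (p : Sym2 (Fin hn)), p ∈ E → v ∈ Sym2.map φ p →
      ∃ l ∈ L, Sym2.map φ p = s(v, l) := by
    intro p hp hv
    induction p using Sym2.ind with
    | _ u w =>
      rw [hmemE] at hp
      obtain ⟨huw, hnadj⟩ := hp
      obtain ⟨hu, hw⟩ := hbadT huw hnadj
      rw [Sym2.map_pair_eq] at hv ⊢
      have hne : φ u ≠ φ w := hinj.ne huw.ne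
      rcases Sym2.mem_iff.mp hv with h | h
      · rcases Finset.mem_insert.mp hw with h2 | h2
        · exact absurd (h.symm.trans h2.symm) hne
        · exact ⟨φ w, h2, by rw [h]⟩
      · rcases Finset.mem_insert.mp hu with h2 | h2
        · exact absurd (h2.trans h) hne
        · exact ⟨φ u, h2, by rw [h, Sym2.eq_swap]⟩
  have hFsub : ∀ (p : Sym2 (Fin hn)), p ∈ E → v ∈ Sym2.map φ p → F ⊆ CN p := by
    intro p hp hv
    obtain ⟨l, hlL, hmap⟩ := hvpairL p hp hv
    induction p using Sym2.ind with
    | _ u w =>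
      intro x hx
      obtain ⟨hxK, hxim⟩ := Finset.mem_sdiff.mp hx
      rw [hCNmk]
      refine Finset.mem_sdiff.mpr ⟨Finset.mem_filter.mpr ⟨Finset.mem_univ _, ?_⟩, hxim⟩
      rw [Sym2.map_pair_eq] at hmap
      rcases Sym2.eq_iff.mp hmap with ⟨h1, h2⟩ | ⟨h1, h2⟩
      · exact ⟨by rw [h1]; exact hKv x hxK, by rw [h2]; exact hKL x hxK l hlL⟩
      · exact ⟨by rw [h1]; exact hKL x hxK l hlL, by rw [h2]; exact hKv x hxK⟩
  have hbigsub : ∀ (p : Sym2 (Fin hn)), p ∈ E → v ∉ Sym2.map φ p →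
      hn * hn + 1 ≤ (CN p).card := by
    intro p hp hv
    induction p using Sym2.ind with
    | _ u w =>
      rw [hmemE] at hp
      obtain ⟨huw, hnadj⟩ := hp
      obtain ⟨hu, hw⟩ := hbadT huw hnadj
      rw [Sym2.map_pair_eq, Sym2.mem_iff] at hv
      push_neg at hv
      have hu' : φ u ∈ L := by
        rcases Finset.mem_insert.mp hu with h | h
        · exact absurd h.symm hv.1
        · exact h
      have hw' : φ w ∈ L := by
        rcases Finset.mem_insert.mp hw with h | h
        · exact absurd h.symm hv.2
        · exact h
      have h1 := hbig _ hu' _ hw' (hinj.ne huw.ne)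
      rw [hCNmk]
      have h2 := Finset.le_card_sdiff (Finset.image φ Finset.univ)
        (Finset.univ.filter (fun x => G.Adj (φ u) x ∧ G.Adj (φ w) x))
      omega
  -- Hall's condition
  set t : {p // p ∈ E} → Finset (Fin n) := fun q => CN q.1 with ht
  have hHall : ∀ s : Finset {p // p ∈ E}, s.card ≤ (s.biUnion t).card := by
    intro s
    rcases s.eq_empty_or_nonempty with rfl | hs
    · simp
    by_cases hbq : ∃ q ∈ s, v ∉ Sym2.map φ q.1
    · obtain ⟨q, hq, hqv⟩ := hbq
      calc s.card ≤ Finset.univ.card := Finset.card_le_univ s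
      _ = Fintype.card {p // p ∈ E} := rfl
      _ = E.card := Fintype.card_coe E
      _ ≤ hn * hn + 1 := hEcard
      _ ≤ (CN q.1).card := hbigsub q.1 q.2 hqv
      _ = (t q).card := rfl
      _ ≤ (s.biUnion t).card := Finset.card_le_card (Finset.subset_biUnion_of_mem t hq)
    · push_neg at hbq
      obtain ⟨q₀, hq₀⟩ := hs
      rcases hKcard with hc1 | ⟨-, hc2⟩
      · have hsel : ∀ q : {p // p ∈ E}, q ∈ s →
            ∃ l, l ∈ L ∧ Sym2.map φ q.1 = s(v, l) := by
          intro q hq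
          obtain ⟨l, h1, h2⟩ := hvpairL q.1 q.2 (hbq q hq)
          exact ⟨l, h1, h2⟩
        have : Nonempty (Fin n) := ⟨v⟩
        choose! f hf1 hf2 using hsel
        have hsL : s.card ≤ L.card := by
          apply Finset.card_le_card_of_injOn f (fun q hq => hf1 q hq)
          intro q hq q' hq' e
          have h1 : Sym2.map φ q.1 = Sym2.map φ q'.1 := by
            rw [hf2 q (Finset.mem_coe.mp hq), hf2 q' (Finset.mem_coe.mp hq'), e]
          exact Subtype.ext (Sym2.map.injective hinj h1)
        calc s.card ≤ L.card := hsL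
        _ ≤ F.card := by omega
        _ ≤ (t q₀).card := Finset.card_le_card (hFsub q₀.1 q₀.2 (hbq q₀ hq₀))
        _ ≤ (s.biUnion t).card := Finset.card_le_card (Finset.subset_biUnion_of_mem t hq₀)
      · exfalso
        obtain ⟨l, hl, hmap⟩ := hvpairL q₀.1 q₀.2 (hbq q₀ hq₀)
        have hq0E := Finset.mem_filter.mp q₀.2
        exact hq0E.2.2 (by rw [hmap]; exact (G.mem_edgeSet).mpr (hc2 l hl))
  obtain ⟨f, hfinj, hfmem⟩ := (Finset.all_card_le_biUnion_card_iff_exists_injective t).mp hHall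
  set M : Sym2 (Fin hn) → Fin n := fun p => if hp : p ∈ E then f ⟨p, hp⟩ else v with hM
  have hMval : ∀ (p : Sym2 (Fin hn)) (hp : p ∈ E), M p = f ⟨p, hp⟩ := by
    intro p hp; rw [hM]; simp only [dif_pos hp]
  apply containsSubdiv_of_mid G H φ hinj M
  · intro u w huw hnadj
    have hpE : s(u, w) ∈ E := (hmemE u w).mpr ⟨huw, hnadj⟩
    rw [hMval _ hpE]
    have hmem := hfmem ⟨s(u, w), hpE⟩
    rw [ht] at hmem
    simp only at hmem
    rw [hCNmk] at hmem
    obtain ⟨hin, hnim⟩ := Finset.mem_sdiff.mp hmem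
    obtain ⟨-, ha1, ha2⟩ := Finset.mem_filter.mp hin
    refine ⟨ha1, ha2.symm, ?_⟩
    rintro ⟨y, hy⟩
    exact hnim (Finset.mem_image.mpr ⟨y, Finset.mem_univ y, hy⟩)
  · intro u w u' w' h h' hn1 hn2 hne
    have hpE : s(u, w) ∈ E := (hmemE u w).mpr ⟨h, hn1⟩
    have hpE' : s(u', w') ∈ E := (hmemE u' w').mpr ⟨h', hn2⟩
    rw [hMval _ hpE, hMval _ hpE']
    intro e
    exact hne (congrArg Subtype.val (hfinj e))


theorem statement6 {ι : Type*} [Fintype ι] [Nonempty ι]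
    (m : ι → ℕ) (ℋ : ∀ i, SimpleGraph (Fin (m i)))
    (hγ : 1 ≤ gammaFam m ℋ) (C : ℝ)
    (hC : ∀ i, 2 * (m i : ℝ) ^ 3 < C ∧ 100 * ((ℋ i).edgeSet.ncard : ℝ) < C) :
    ∃ N : ℕ, ∀ n : ℕ, N ≤ n →
      ∀ G : SimpleGraph (Fin n), G ∈ SPEX n m ℋ →
      ∀ x : Fin n → ℝ, (∀ v, 0 ≤ x v) → (∑ v, x v ^ 2) = 1 →
        adjMat G *ᵥ x = specRad G • x →
      ∀ u₀ : Fin n, (∀ v, x v ≤ x u₀) →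
      ∀ L : Finset (Fin n), L.card = gammaFam m ℋ →
        (∀ u ∈ L, (1 - 1 / (2 * (10 * C) ^ 2)) * x u₀ ≤ x u ∧
          (1 - 1 / (10 * C) ^ 2) * (n : ℝ) ≤ ((G.neighborSet u).ncard : ℝ)) →
      (∀ v ∈ Sd G L, (G.neighborSet v ∩ Sdd G L).ncard ≤ maxOrderFam m - 2) ∧
      (∀ v ∈ Sdd G L, (G.neighborSet v ∩ Sdd G L).ncard ≤ alphaFam m ℋ) := by
  classical
  refine ⟨2 * (maxOrderFam m * maxOrderFam m + maxOrderFam m + 1), ?_⟩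
  intro n hNn G hG x hxpos hxsum hev u₀ hu₀ L hLcard hLprop
  obtain ⟨hfree, -⟩ := hG
  -- choose a minimal graph H = ℋ i
  have hne1 : {g : ℕ | ∃ i, gammaOf (ℋ i) = g}.Nonempty :=
    ⟨gammaOf (ℋ (Classical.arbitrary ι)), Classical.arbitrary ι, rfl⟩
  obtain ⟨i₀, hi₀⟩ := Nat.sInf_mem hne1
  have hne2 : {k : ℕ | ∃ i, gammaOf (ℋ i) = gammaFam m ℋ ∧ m i = k}.Nonempty :=
    ⟨m i₀, i₀, hi₀, rfl⟩
  obtain ⟨i, hiγ, him⟩ := Nat.sInf_mem hne2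
  -- an independent set of maximal size
  have hSne : {k : ℕ | ∃ s : Finset (Fin (m i)), IsIndep (ℋ i) ↑s ∧ s.card = k}.Nonempty :=
    ⟨0, ∅, by simp [IsIndep], Finset.card_empty⟩
  have hSbdd : BddAbove {k : ℕ | ∃ s : Finset (Fin (m i)), IsIndep (ℋ i) ↑s ∧ s.card = k} := by
    refine ⟨m i, fun k hk => ?_⟩
    obtain ⟨s, -, rfl⟩ := hk
    simpa using Finset.card_le_univ s
  obtain ⟨A, hAind, hAcard⟩ := Nat.sSup_mem hSne hSbdd
  have hgOf : m i - indepNum (ℋ i) - 1 = gammaFam m ℋ := by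
    rw [← hiγ, gammaOf, Fintype.card_fin]
  have hmi : m i = indepNum (ℋ i) + gammaFam m ℋ + 1 := by omega
  have hAcard' : A.card = indepNum (ℋ i) := hAcard
  have halpha : alphaFam m ℋ = indepNum (ℋ i) := by
    rw [alphaFam, minOrderAtGamma, ← him]; omega
  have hMo : m i ≤ maxOrderFam m :=
    le_csSup (Set.finite_range m).bddAbove ⟨i, rfl⟩
  -- bounds on C
  have hmi2 : 2 ≤ m i := by omega
  have hC16 : (16 : ℝ) < C := by
    have h1 := (hC i).1
    have h2 : (2 : ℝ) ≤ (m i : ℝ) := by exact_mod_cast hmi2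
    have h3 : (2 : ℝ) ^ 3 ≤ (m i : ℝ) ^ 3 :=
      pow_le_pow_left₀ (by norm_num) h2 3
    nlinarith
  have hfrac : (3 / 4 : ℝ) ≤ 1 - 1 / (10 * C) ^ 2 := by
    have h2 : (4 : ℝ) ≤ (10 * C) ^ 2 := by nlinarith
    have h3 : (1 : ℝ) / (10 * C) ^ 2 ≤ 1 / 4 := by
      apply one_div_le_one_div_of_le <;> norm_num
      linarith
    linarith
  -- neighborhood sets as finsets
  have hdeg : ∀ u : Fin n, (G.neighborSet u).ncard
      = (Finset.univ.filter (fun y => G.Adj u y)).card := by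
    intro u
    rw [← Set.ncard_coe_finset]
    congr 1
    ext y
    simp [SimpleGraph.mem_neighborSet]
  have hdegN : ∀ u ∈ L, 3 * n ≤ 4 * (Finset.univ.filter (fun y => G.Adj u y)).card := by
    intro u hu
    have h1 := (hLprop u hu).2
    rw [hdeg] at h1
    have h2 : (0 : ℝ) ≤ (n : ℝ) := Nat.cast_nonneg n
    have h3 : (3 : ℝ) * n ≤ 4 * ((Finset.univ.filter (fun y => G.Adj u y)).card : ℝ) := by
      nlinarith
    exact_mod_cast h3
  -- the common-neighborhood bound
  have hnbig : 2 * (m i * m i + m i + 1) ≤ n := by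
    refine le_trans ?_ hNn
    have h1 := Nat.mul_le_mul hMo hMo
    omega
  have hbig : ∀ l₁ ∈ L, ∀ l₂ ∈ L, l₁ ≠ l₂ → m i * m i + m i + 1 ≤
      (Finset.univ.filter (fun y => G.Adj l₁ y ∧ G.Adj l₂ y)).card := by
    intro l₁ h₁ l₂ h₂ h12
    have hIE := Finset.card_union_add_card_inter
      (Finset.univ.filter (fun y => G.Adj l₁ y)) (Finset.univ.filter (fun y => G.Adj l₂ y))
    have hun : (Finset.univ.filter (fun y => G.Adj l₁ y)
        ∪ Finset.univ.filter (fun y => G.Adj l₂ y)).card ≤ n := by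
      simpa using Finset.card_le_univ (Finset.univ.filter (fun y => G.Adj l₁ y)
        ∪ Finset.univ.filter (fun y => G.Adj l₂ y))
    have e1 : (Finset.univ.filter (fun y => G.Adj l₁ y ∧ G.Adj l₂ y))
        = Finset.univ.filter (fun y => G.Adj l₁ y) ∩ Finset.univ.filter (fun y => G.Adj l₂ y) :=
      Finset.filter_and _ _ _
    rw [e1]
    have hd1 := hdegN l₁ h₁
    have hd2 := hdegN l₂ h₂
    have h1 := Nat.mul_le_mul hMo hMo
    omega
  -- packaging the neighborhood ∩ S'' finset
  have hKset : ∀ v : Fin n, G.neighborSet v ∩ Sdd G L =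
      ↑(Finset.univ.filter (fun y => G.Adj v y ∧ y ∉ L ∧ ∀ w ∈ L, G.Adj w y)) := by
    intro v
    ext y
    simp [Sdd, SimpleGraph.mem_neighborSet, and_assoc]
  constructor
  · -- part 1 : v ∈ S'
    intro v hv
    by_contra hcon
    set K : Finset (Fin n) :=
      Finset.univ.filter (fun y => G.Adj v y ∧ y ∉ L ∧ ∀ w ∈ L, G.Adj w y) with hK
    have hKcard : A.card + gammaFam m ℋ ≤ K.card := by
      have h1 : (G.neighborSet v ∩ Sdd G L).ncard = K.card := by
        rw [hKset v, Set.ncard_coe_finset]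
      omega
    refine hfree i (build G (ℋ i) A hAind (gammaFam m ℋ) (by omega) L hLcard v hv.1 K
      ?_ ?_ ?_ hbig (Or.inl hKcard))
    · intro k hk; exact (Finset.mem_filter.mp hk).2.1
    · intro k hk l hl; exact (Finset.mem_filter.mp hk).2.2.2 l hl
    · intro k hk; exact (Finset.mem_filter.mp hk).2.2.1
  · -- part 2 : v ∈ S''
    intro v hv
    by_contra hcon
    set K : Finset (Fin n) :=
      Finset.univ.filter (fun y => G.Adj v y ∧ y ∉ L ∧ ∀ w ∈ L, G.Adj w y) with hK
    have hKcard : A.card ≤ K.card := by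
      have h1 : (G.neighborSet v ∩ Sdd G L).ncard = K.card := by
        rw [hKset v, Set.ncard_coe_finset]
      omega
    refine hfree i (build G (ℋ i) A hAind (gammaFam m ℋ) (by omega) L hLcard v hv.1 K
      ?_ ?_ ?_ hbig (Or.inr ⟨hKcard, fun l hl => (hv.2 l hl).symm⟩))
    · intro k hk; exact (Finset.mem_filter.mp hk).2.1
    · intro k hk l hl; exact (Finset.mem_filter.mp hk).2.2.2 l hl
    · intro k hk; exact (Finset.mem_filter.mp hk).2.2.1


end SubdivPaper
end

section
/- Under Setup-4, for every positive integer λ, |L^λ| < (10C_𝓗)^{λ−10} n. -/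
/-!
If `|L^λ| ≥ (10C)^{λ-10} n`, then every `u ∈ L^λ` has degree at least
`ρ x_u / x_{u*} ≥ ρ (10C)^{-λ}`, so the degree sum is at least `n ρ (10C)^{-10}`; as
`ρ ≥ √(γ (n - γ)) → ∞`, the average degree of `G` eventually exceeds any constant. But, following
Mader, average degree above `2 (|H| + 1) 2^{e(H)}` forces a subdivision of `H`: pass to a subgraph
of large minimum degree, inside it grow a connected core `U` whose neighbourhood shell keeps half
the minimum degree, embed `H` minus one edge in the shell by induction and route the last edge
through `U`.
-/

open Matrix

namespace SubdivPaper

variable {ι : Type*}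

section DegreeIn

open Finset

variable {V : Type*} (G : SimpleGraph V) [DecidableRel G.Adj]

def degreeIn (S : Finset V) (v : V) : ℕ := #{w ∈ S | G.Adj v w}

variable {G}

lemma degreeIn_eq_sum (S : Finset V) (v : V) :
    degreeIn G S v = ∑ w ∈ S, if G.Adj v w then 1 else 0 :=
  card_filter _ _

lemma degreeIn_le_degreeIn {S T : Finset V} {v : V}
    (h : ∀ w ∈ S, G.Adj v w → w ∈ T) : degreeIn G S v ≤ degreeIn G T v :=
  card_le_card fun w hw ↦ by
    simp only [mem_filter] at hw ⊢
    exact ⟨h w hw.1 hw.2, hw.2⟩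

lemma degreeIn_lt_card {S : Finset V} {v : V} (hv : v ∈ S) : degreeIn G S v < #S :=
  card_lt_card (filter_ssubset.2 ⟨v, hv, G.loopless.irrefl v⟩)

variable [DecidableEq V]

lemma degreeIn_eq_degreeIn_erase_add (S : Finset V) {w : V} (hw : w ∈ S) (v : V) :
    degreeIn G S v = degreeIn G (S.erase w) v + if G.Adj v w then 1 else 0 := by
  rw [degreeIn_eq_sum, degreeIn_eq_sum, ← add_sum_erase S _ hw, add_comm]

lemma sum_degreeIn_erase {S : Finset V} {w : V} (hw : w ∈ S) :
    ∑ v ∈ S.erase w, degreeIn G (S.erase w) v + 2 * degreeIn G S w =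
      ∑ v ∈ S, degreeIn G S v := by
  have hback : ∑ v ∈ S.erase w, (if G.Adj v w then 1 else 0) = degreeIn G S w := by
    simp only [degreeIn_eq_degreeIn_erase_add S hw w, SimpleGraph.irrefl, if_false, add_zero,
      degreeIn_eq_sum, G.adj_comm _ w]
  rw [← add_sum_erase S _ hw,
    sum_congr rfl fun v _ ↦ degreeIn_eq_degreeIn_erase_add S hw v, sum_add_distrib, hback]
  ring

/-- Deleting vertices of degree less than `D` one at a time keeps `∑ deg > 2 D |S|`. -/
lemma exists_forall_le_degreeIn (D : ℕ) (S : Finset V)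
    (hS : 2 * D * #S < ∑ v ∈ S, degreeIn G S v) :
    ∃ T : Finset V, T.Nonempty ∧ ∀ v ∈ T, D ≤ degreeIn G T v := by
  induction S using Finset.strongInduction with
  | H S ih =>
    by_cases hall : ∀ v ∈ S, D ≤ degreeIn G S v
    · refine ⟨S, nonempty_iff_ne_empty.2 ?_, hall⟩
      rintro rfl
      simp at hS
    · push Not at hall
      obtain ⟨v, hv, hlt⟩ := hall
      refine ih _ (erase_ssubset hv) ?_
      have := sum_degreeIn_erase (G := G) hv
      have : 2 * D * (#S - 1) + 2 * D = 2 * D * #S := by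
        rw [← mul_add_one, Nat.sub_one_add_one (card_pos.2 ⟨v, hv⟩).ne']
      rw [card_erase_of_mem hv]
      omega

end DegreeIn

section ConnectedWithin

open Finset

variable {V : Type*} (G : SimpleGraph V)

def ConnectedWithin (S : Finset V) : Prop :=
  ∀ a ∈ S, ∀ b ∈ S, ∃ p : G.Walk a b, ∀ x ∈ p.support, x ∈ S

variable {G}

lemma ConnectedWithin.of_walk_to {U : Finset V} (u : V)
    (h : ∀ c ∈ U, ∃ p : G.Walk c u, ∀ x ∈ p.support, x ∈ U) : ConnectedWithin G U := by
  intro a ha b hb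
  obtain ⟨pa, hpa⟩ := h a ha
  obtain ⟨pb, hpb⟩ := h b hb
  refine ⟨pa.append pb.reverse, fun x hx ↦ ?_⟩
  rw [SimpleGraph.Walk.mem_support_append_iff, SimpleGraph.Walk.support_reverse,
    List.mem_reverse] at hx
  exact hx.elim (hpa x) (hpb x)

variable [DecidableEq V]

lemma ConnectedWithin.insert {U : Finset V} (hU : ConnectedWithin G U) {u w : V} (hu : u ∈ U)
    (hadj : G.Adj u w) : ConnectedWithin G (insert w U) := by
  refine .of_walk_to u fun c hc ↦ ?_
  rcases mem_insert.1 hc with rfl | hc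
  · exact ⟨.cons hadj.symm .nil, by simp [hu]⟩
  · obtain ⟨p, hp⟩ := hU c hc u hu
    exact ⟨p, fun x hx ↦ mem_insert_of_mem (hp x hx)⟩

lemma ConnectedWithin.exists_isPath {U : Finset V} (hU : ConnectedWithin G U) {x y u₁ u₂ : V}
    (hu₁ : u₁ ∈ U) (hu₂ : u₂ ∈ U) (hx : G.Adj x u₁) (hy : G.Adj u₂ y) :
    ∃ p : G.Walk x y, p.IsPath ∧ ∀ z ∈ p.support, z = x ∨ z = y ∨ z ∈ U := by
  obtain ⟨q, hq⟩ := hU u₁ hu₁ u₂ hu₂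
  refine ⟨(SimpleGraph.Walk.cons hx (q.concat hy)).bypass, SimpleGraph.Walk.bypass_isPath _,
    fun z hz ↦ ?_⟩
  have := SimpleGraph.Walk.support_bypass_subset_support _ hz
  simp only [SimpleGraph.Walk.support_cons, SimpleGraph.Walk.support_concat, List.mem_cons,
    List.mem_append, List.not_mem_nil, or_false] at this
  rcases this with h | h | h
  · exact .inl h
  · exact .inr (.inr (hq z h))
  · exact .inr (.inl h)

variable [DecidableRel G.Adj]

lemma exists_connectedWithin_forall_le_degreeIn {D : ℕ} {S : Finset V} (hS : S.Nonempty)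
    (hdeg : ∀ v ∈ S, D ≤ degreeIn G S v) :
    ∃ C ⊆ S, C.Nonempty ∧ ConnectedWithin G C ∧ ∀ v ∈ C, D ≤ degreeIn G C v := by
  classical
  obtain ⟨v₀, hv₀⟩ := hS
  set C := {b ∈ S | ∃ p : G.Walk b v₀, ∀ x ∈ p.support, x ∈ S}
  have hmem : ∀ {b}, b ∈ S → ∀ p : G.Walk b v₀, (∀ x ∈ p.support, x ∈ S) →
      ∀ x ∈ p.support, x ∈ C := fun {b} _ p hp x hx ↦
    mem_filter.2 ⟨hp x hx, p.dropUntil x hx,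
      fun y hy ↦ hp y (p.support_dropUntil_subset_support hx hy)⟩
  refine ⟨C, filter_subset _ _, ⟨v₀, mem_filter.2 ⟨hv₀, .nil, by simpa⟩⟩,
    .of_walk_to v₀ fun c hc ↦ ?_, fun v hv ↦ (hdeg v (filter_subset _ _ hv)).trans ?_⟩
  · obtain ⟨hcS, p, hp⟩ := mem_filter.1 hc
    exact ⟨p, hmem hcS p hp⟩
  · obtain ⟨hvS, p, hp⟩ := mem_filter.1 hv
    refine degreeIn_le_degreeIn fun x hx hadj ↦ ?_
    refine hmem hx (.cons hadj.symm p) ?_ x (by simp)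
    simpa [hx] using hp

end ConnectedWithin

section Shell

open Finset

variable {V : Type*} [DecidableEq V] (G : SimpleGraph V) [DecidableRel G.Adj]

def outerNbhd (S U : Finset V) : Finset V := {w ∈ S \ U | ∃ u ∈ U, G.Adj u w}

/-- The quantity kept above `2 d (|S| + 1)` while a connected core `U` grows inside `S`. -/
def shellPotential (d : ℕ) (S U : Finset V) : ℕ :=
  ∑ v ∈ S \ U, degreeIn G (S \ U) v + 2 * #(outerNbhd G S U) + 2 * d * #U

variable {G}

lemma mem_outerNbhd {S U : Finset V} {w : V} :
    w ∈ outerNbhd G S U ↔ w ∈ S ∧ w ∉ U ∧ ∃ u ∈ U, G.Adj u w := by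
  simp [outerNbhd, and_assoc]

lemma shellPotential_singleton (d : ℕ) {S : Finset V} {v : V} (hv : v ∈ S) :
    shellPotential G d S {v} = ∑ u ∈ S, degreeIn G S u + 2 * d := by
  have hout : outerNbhd G S {v} = {w ∈ S | G.Adj v w} := by
    ext w
    simp only [mem_outerNbhd, mem_singleton, exists_eq_left, mem_filter]
    exact ⟨fun h ↦ ⟨h.1, h.2.2⟩, fun h ↦ ⟨h.1, fun hw ↦ G.ne_of_adj h.2 hw.symm, h.2⟩⟩
  rw [shellPotential, hout, sdiff_singleton_eq_erase, ← sum_degreeIn_erase hv, card_singleton,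
    degreeIn]
  ring

lemma card_outerNbhd_add_degreeIn_le (S U : Finset V) (w : V) :
    #(outerNbhd G S U) + degreeIn G (S \ U) w ≤
      #(outerNbhd G S (insert w U)) + 1 + degreeIn G (outerNbhd G S U) w := by
  set W := outerNbhd G S U
  set N := {x ∈ S \ U | G.Adj w x}
  have hsub : W ∪ N ⊆ insert w (outerNbhd G S (insert w U)) := by
    intro x hx
    rw [mem_insert, mem_outerNbhd, mem_insert]
    rcases mem_union.1 hx with hx | hx
    · obtain ⟨hxS, hxU, u, hu, hadj⟩ := mem_outerNbhd.1 hx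
      by_cases hxw : x = w
      · exact .inl hxw
      · exact .inr ⟨hxS, by tauto, u, mem_insert_of_mem hu, hadj⟩
    · obtain ⟨hx, hadj⟩ := mem_filter.1 hx
      exact .inr ⟨(mem_sdiff.1 hx).1, by simp [(mem_sdiff.1 hx).2, G.ne_of_adj hadj |>.symm],
        w, mem_insert_self w U, hadj⟩
  have hinter : W ∩ N = {x ∈ W | G.Adj w x} := by
    ext x
    simp only [mem_inter, mem_filter, N, and_congr_right_iff, and_iff_right_iff_imp]
    intro hx _
    exact mem_sdiff.2 ⟨(mem_outerNbhd.1 hx).1, (mem_outerNbhd.1 hx).2.1⟩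
  have := card_union_add_card_inter W N
  have := (card_le_card hsub).trans (card_insert_le _ _)
  rw [hinter] at *
  change #W + #N ≤ _ + 1 + #{x ∈ W | G.Adj w x}
  omega

lemma shellPotential_add_le {d : ℕ} {S U : Finset V} {w : V} (hw : w ∈ outerNbhd G S U) :
    shellPotential G d S U + 2 * d ≤
      shellPotential G d S (insert w U) + 2 + 2 * degreeIn G (outerNbhd G S U) w := by
  obtain ⟨hwS, hwU, -⟩ := mem_outerNbhd.1 hw
  have herase := sum_degreeIn_erase (G := G) (mem_sdiff.2 ⟨hwS, hwU⟩)
  have hcard := card_outerNbhd_add_degreeIn_le (G := G) S U w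
  rw [shellPotential, shellPotential, sdiff_insert, card_insert_of_notMem hwU, mul_add_one]
  omega

lemma ConnectedWithin.outerNbhd_nonempty {S U : Finset V} (hS : ConnectedWithin G S)
    (hUS : U ⊆ S) (hU : U.Nonempty) (hSU : ¬ S ⊆ U) : (outerNbhd G S U).Nonempty := by
  obtain ⟨b, hb, hbU⟩ := not_subset.1 hSU
  obtain ⟨u, hu⟩ := hU
  obtain ⟨p, hp⟩ := hS u (hUS hu) b hb
  obtain ⟨e, he, heU, heU'⟩ := p.exists_boundary_dart U hu hbU
  exact ⟨e.snd, mem_outerNbhd.2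
    ⟨hp _ (p.dart_snd_mem_support_of_mem_darts he), heU', e.fst, heU, e.adj⟩⟩

/-- Take `U` of maximum size among the connected sets keeping the shell potential at least
`2 d (|S| + 1)`. -/
lemma exists_core_of_connectedWithin {d : ℕ} (hd : 1 ≤ d) {S : Finset V} (hS : S.Nonempty)
    (hconn : ConnectedWithin G S) (hdeg : ∀ v ∈ S, 2 * d ≤ degreeIn G S v) :
    ∃ U ⊆ S, ConnectedWithin G U ∧ (outerNbhd G S U).Nonempty ∧
      ∀ w ∈ outerNbhd G S U, d ≤ degreeIn G (outerNbhd G S U) w := by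
  classical
  obtain ⟨v₀, hv₀⟩ := hS
  set 𝒰 := {U ∈ S.powerset | ConnectedWithin G U ∧ 2 * d * (#S + 1) ≤ shellPotential G d S U}
  have hv₀𝒰 : {v₀} ∈ 𝒰 := by
    refine mem_filter.2 ⟨by simpa, .of_walk_to v₀ fun c hc ↦ ?_, ?_⟩
    · rw [mem_singleton.1 hc]
      exact ⟨.nil, by simp⟩
    · have := card_nsmul_le_sum S _ _ hdeg
      rw [shellPotential_singleton d hv₀, mul_add_one]
      simp only [smul_eq_mul] at this
      linarith
  obtain ⟨U, hU𝒰, hUmax⟩ := exists_max_image 𝒰 card ⟨_, hv₀𝒰⟩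
  obtain ⟨hUS, hUconn, hUpot⟩ := mem_filter.1 hU𝒰
  rw [mem_powerset] at hUS
  obtain ⟨u₀, hu₀⟩ : U.Nonempty := card_pos.1 ((card_singleton v₀).symm.le.trans (hUmax _ hv₀𝒰))
  have hW : (outerNbhd G S U).Nonempty := by
    refine hconn.outerNbhd_nonempty hUS ⟨u₀, hu₀⟩ fun hSU ↦ ?_
    obtain rfl := hUS.antisymm hSU
    simp [shellPotential, outerNbhd] at hUpot
    nlinarith
  refine ⟨U, hUS, hUconn, hW, fun w hw ↦ ?_⟩
  obtain ⟨hwS, hwU, u, hu, hadj⟩ := mem_outerNbhd.1 hw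
  have hnot : insert w U ∉ 𝒰 := fun h ↦ by
    have := hUmax _ h
    rw [card_insert_of_notMem hwU] at this
    omega
  have hpot : shellPotential G d S (insert w U) < 2 * d * (#S + 1) := by
    by_contra! h
    exact hnot (mem_filter.2 ⟨mem_powerset.2 (insert_subset hwS hUS), hUconn.insert hu hadj, h⟩)
  have := shellPotential_add_le (d := d) hw
  omega

lemma exists_linked_shell {d : ℕ} (hd : 1 ≤ d) {S : Finset V} (hS : S.Nonempty)
    (hdeg : ∀ v ∈ S, 2 * d ≤ degreeIn G S v) :
    ∃ U W : Finset V, U ⊆ S ∧ W ⊆ S ∧ Disjoint U W ∧ W.Nonempty ∧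
      (∀ w ∈ W, d ≤ degreeIn G W w) ∧
      ∀ x ∈ W, ∀ y ∈ W, ∃ p : G.Walk x y, p.IsPath ∧ ∀ z ∈ p.support, z = x ∨ z = y ∨ z ∈ U := by
  obtain ⟨C, hCS, hC, hCconn, hCdeg⟩ := exists_connectedWithin_forall_le_degreeIn hS hdeg
  obtain ⟨U, hUC, hUconn, hW, hWdeg⟩ := exists_core_of_connectedWithin hd hC hCconn hCdeg
  refine ⟨U, outerNbhd G C U, hUC.trans hCS, fun w hw ↦ hCS (mem_outerNbhd.1 hw).1,
    disjoint_right.2 fun w hw ↦ (mem_outerNbhd.1 hw).2.1, hW, hWdeg, fun x hx y hy ↦ ?_⟩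
  obtain ⟨-, -, u₁, hu₁, hx⟩ := mem_outerNbhd.1 hx
  obtain ⟨-, -, u₂, hu₂, hy⟩ := mem_outerNbhd.1 hy
  exact hUconn.exists_isPath hu₁ hu₂ hx.symm hy

end Shell

section Subdivision

open Finset

variable {V W : Type*}

/-- Unlike in `ContainsSubdiv`, the paths chosen for the two orientations of an edge are
unrelated. -/
structure SubdivisionIn (G : SimpleGraph V) (H : SimpleGraph W) (S : Finset V) where
  branch : W → V
  injective : Function.Injective branch
  branch_mem : ∀ w, branch w ∈ S
  path : ∀ ⦃u v : W⦄, H.Adj u v → G.Walk (branch u) (branch v)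
  isPath : ∀ ⦃u v : W⦄ (h : H.Adj u v), (path h).IsPath
  support_subset : ∀ ⦃u v : W⦄ (h : H.Adj u v), ∀ x ∈ (path h).support, x ∈ S
  internal_notMem_range : ∀ ⦃u v : W⦄ (h : H.Adj u v), ∀ x ∈ WalkInternal (path h),
    x ∉ Set.range branch
  disjoint_internal : ∀ ⦃u v u' v' : W⦄ (h : H.Adj u v) (h' : H.Adj u' v'),
    s(u, v) ≠ s(u', v') → Disjoint (WalkInternal (path h)) (WalkInternal (path h'))

variable {G : SimpleGraph V} {H : SimpleGraph W} {S : Finset V}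

lemma walkInternal_reverse {a b : V} (p : G.Walk a b) :
    WalkInternal p.reverse = WalkInternal p := by
  ext x
  simp only [WalkInternal, Set.mem_ofPred_eq, SimpleGraph.Walk.support_reverse, List.mem_reverse]
  tauto

lemma walkInternal_subset {U : Finset V} {x y : V} {p : G.Walk x y}
    (hp : ∀ z ∈ p.support, z = x ∨ z = y ∨ z ∈ U) : WalkInternal p ⊆ U := by
  rintro z ⟨hz, hzx, hzy⟩
  exact ((hp z hz).resolve_left hzx).resolve_left hzy

lemma SubdivisionIn.containsSubdiv [LinearOrder W] (σ : SubdivisionIn G H S) :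
    ContainsSubdiv G H := by
  let P : ∀ ⦃u v : W⦄, H.Adj u v → G.Walk (σ.branch u) (σ.branch v) :=
    fun u v h ↦ if u < v then σ.path h else (σ.path h.symm).reverse
  have hP : ∀ ⦃u v : W⦄ (h : H.Adj u v), ∃ (a b : W) (hab : H.Adj a b),
      s(a, b) = s(u, v) ∧ WalkInternal (P h) = WalkInternal (σ.path hab) := fun u v h ↦ by
    by_cases huv : u < v
    · exact ⟨u, v, h, rfl, by simp [P, huv]⟩
    · exact ⟨v, u, h.symm, Sym2.eq_swap, by simp [P, huv, walkInternal_reverse]⟩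
  refine ⟨σ.branch, σ.injective, P, fun u v h ↦ ?_, fun u v h ↦ ?_, fun u v h ↦ ?_,
    fun u v u' v' h h' hne ↦ ?_⟩
  · by_cases huv : u < v
    · simpa [P, huv] using σ.isPath h
    · simpa [P, huv] using σ.isPath h.symm
  · rcases lt_trichotomy u v with huv | rfl | huv
    · simp [P, huv, huv.not_gt]
    · exact absurd h (H.loopless.irrefl u)
    · simp [P, huv, huv.not_gt]
  · obtain ⟨a, b, hab, -, he⟩ := hP h
    exact he ▸ σ.internal_notMem_range hab
  · obtain ⟨a, b, hab, hs, he⟩ := hP h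
    obtain ⟨a', b', hab', hs', he'⟩ := hP h'
    rw [he, he', ← Set.disjoint_iff_inter_eq_empty]
    exact σ.disjoint_internal hab hab' (hs ▸ hs' ▸ hne)

lemma nonempty_subdivisionIn_of_edgeSet_eq_empty [Fintype W] (hH : H.edgeSet = ∅)
    (hS : Fintype.card W ≤ #S) : Nonempty (SubdivisionIn G H S) := by
  obtain ⟨f⟩ := Function.Embedding.nonempty_of_card_le (hS.trans_eq (Fintype.card_coe S).symm)
  have hnadj : ∀ ⦃u v : W⦄, ¬ H.Adj u v := fun u v h ↦ by
    simpa [hH] using (SimpleGraph.mem_edgeSet H).2 h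
  exact ⟨⟨fun w ↦ f w, Subtype.val_injective.comp f.injective, fun w ↦ (f w).2,
    fun u v h ↦ (hnadj h).elim, fun u v h ↦ (hnadj h).elim, fun u v h ↦ (hnadj h).elim,
    fun u v h ↦ (hnadj h).elim, fun u v _ _ h ↦ (hnadj h).elim⟩⟩

lemma SubdivisionIn.nonempty_of_deleteEdges {a b : W} {T U : Finset V}
    (σ : SubdivisionIn G (H.deleteEdges {s(a, b)}) T) (hTS : T ⊆ S) (hUS : U ⊆ S)
    (hUT : Disjoint U T)
    (hlink : ∀ x ∈ T, ∀ y ∈ T, ∃ p : G.Walk x y, p.IsPath ∧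
      ∀ z ∈ p.support, z = x ∨ z = y ∨ z ∈ U) :
    Nonempty (SubdivisionIn G H S) := by
  classical
  choose q hq hqU using hlink
  have hold : ∀ ⦃u v : W⦄, H.Adj u v → s(u, v) ≠ s(a, b) → (H.deleteEdges {s(a, b)}).Adj u v :=
    fun u v h hs ↦ SimpleGraph.deleteEdges_adj.2 ⟨h, hs⟩
  let P : ∀ ⦃u v : W⦄, H.Adj u v → G.Walk (σ.branch u) (σ.branch v) := fun u v h ↦
    if hs : s(u, v) = s(a, b) then q _ (σ.branch_mem u) _ (σ.branch_mem v)
    else σ.path (hold h hs)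
  have hPnew : ∀ ⦃u v : W⦄ (h : H.Adj u v) (hs : s(u, v) = s(a, b)),
      P h = q _ (σ.branch_mem u) _ (σ.branch_mem v) := fun u v h hs ↦ dif_pos hs
  have hPold : ∀ ⦃u v : W⦄ (h : H.Adj u v) (hs : s(u, v) ≠ s(a, b)),
      P h = σ.path (hold h hs) := fun u v h hs ↦ dif_neg hs
  have hnew : ∀ ⦃u v : W⦄ (h : H.Adj u v), s(u, v) = s(a, b) → WalkInternal (P h) ⊆ U :=
    fun u v h hs ↦ hPnew h hs ▸ walkInternal_subset (hqU _ (σ.branch_mem u) _ (σ.branch_mem v))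
  have hold_sub : ∀ ⦃u v : W⦄ (h : H.Adj u v), s(u, v) ≠ s(a, b) → WalkInternal (P h) ⊆ T :=
    fun u v h hs x hx ↦ σ.support_subset _ x (hPold h hs ▸ hx).1
  refine ⟨⟨σ.branch, σ.injective, fun w ↦ hTS (σ.branch_mem w), P, fun u v h ↦ ?_,
    fun u v h x hx ↦ ?_, fun u v h x hx ↦ ?_, fun u v u' v' h h' hne ↦ ?_⟩⟩
  · by_cases hs : s(u, v) = s(a, b)
    · exact hPnew h hs ▸ hq _ (σ.branch_mem u) _ (σ.branch_mem v)
    · exact hPold h hs ▸ σ.isPath (hold h hs)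
  · by_cases hs : s(u, v) = s(a, b)
    · rw [hPnew h hs] at hx
      rcases hqU _ _ _ _ x hx with rfl | rfl | hx
      exacts [hTS (σ.branch_mem u), hTS (σ.branch_mem v), hUS hx]
    · rw [hPold h hs] at hx
      exact hTS (σ.support_subset _ x hx)
  · by_cases hs : s(u, v) = s(a, b)
    · rintro ⟨w, rfl⟩
      exact disjoint_left.1 hUT (hnew h hs hx) (σ.branch_mem w)
    · rw [hPold h hs] at hx
      exact σ.internal_notMem_range _ x hx
  · by_cases hs : s(u, v) = s(a, b) <;> by_cases hs' : s(u', v') = s(a, b)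
    · exact absurd (hs.trans hs'.symm) hne
    · exact (disjoint_coe.2 hUT).mono (hnew h hs) (hold_sub h' hs')
    · exact (disjoint_coe.2 hUT).symm.mono (hold_sub h hs) (hnew h' hs')
    · rw [hPold h hs, hPold h' hs']
      exact σ.disjoint_internal (hold h hs) (hold h' hs') hne

variable [DecidableEq V] [DecidableRel G.Adj]

theorem nonempty_subdivisionIn_of_le_degreeIn [Fintype W] (H : SimpleGraph W)
    (hS : S.Nonempty)
    (hdeg : ∀ v ∈ S, (Fintype.card W + 1) * 2 ^ H.edgeSet.ncard ≤ degreeIn G S v) :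
    Nonempty (SubdivisionIn G H S) := by
  induction hk : H.edgeSet.ncard generalizing H S with
  | zero =>
    obtain ⟨v, hv⟩ := hS
    refine nonempty_subdivisionIn_of_edgeSet_eq_empty ((Set.ncard_eq_zero (Set.toFinite _)).1 hk) ?_
    have := hdeg v hv
    have := degreeIn_lt_card (G := G) hv
    rw [hk, pow_zero, mul_one] at *
    omega
  | succ k ih =>
    obtain ⟨e, he⟩ := ((Set.ncard_pos (s := H.edgeSet) (Set.toFinite _)).1 (by omega))
    induction e using Sym2.ind with | h a b => ?_
    have hk' : (H.deleteEdges {s(a, b)}).edgeSet.ncard = k := by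
      rw [SimpleGraph.edgeSet_deleteEdges]
      have := Set.ncard_sdiff_singleton_add_one he
      omega
    have hd : 1 ≤ (Fintype.card W + 1) * 2 ^ k := Nat.one_le_iff_ne_zero.2 (by positivity)
    obtain ⟨U, T, hUS, hTS, hUT, hT, hTdeg, hlink⟩ := exists_linked_shell hd hS fun v hv ↦ by
      simpa [hk, pow_succ, mul_comm, mul_left_comm, mul_assoc] using hdeg v hv
    obtain ⟨σ⟩ := ih (H.deleteEdges {s(a, b)}) hT (hk' ▸ hTdeg) hk'
    exact σ.nonempty_of_deleteEdges hTS hUS hUT hlink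

theorem containsSubdiv_of_sum_degree_gt [Fintype V] [Fintype W] [LinearOrder W]
    (H : SimpleGraph W)
    (h : 2 * ((Fintype.card W + 1) * 2 ^ H.edgeSet.ncard) * Fintype.card V < ∑ v, G.degree v) :
    ContainsSubdiv G H := by
  have hdeg : ∀ v, G.degree v = degreeIn G univ v := fun v ↦ by
    rw [← SimpleGraph.card_neighborFinset_eq_degree, SimpleGraph.neighborFinset_eq_filter,
      degreeIn]
  simp only [hdeg] at h
  obtain ⟨T, hT, hTdeg⟩ := exists_forall_le_degreeIn _ univ h
  obtain ⟨σ⟩ := nonempty_subdivisionIn_of_le_degreeIn (G := G) H hT hTdeg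
  exact σ.containsSubdiv

end Subdivision

section Spectral

open Finset

variable {V : Type*} [Fintype V]

lemma adjMat_eq_adjMatrix {n : ℕ} (G : SimpleGraph (Fin n)) [DecidableRel G.Adj] :
    adjMat G = G.adjMatrix ℝ := by
  ext u v
  simp [adjMat, SimpleGraph.adjMatrix_apply]

lemma pos_of_forall_le_of_sum_sq_eq_one {x : V → ℝ} (hx : ∀ v, 0 ≤ x v) {u₀ : V}
    (hu₀ : ∀ v, x v ≤ x u₀) (hsum : ∑ v, x v ^ 2 = 1) : 0 < x u₀ := by
  by_contra! h
  have hzero : ∀ v, x v = 0 := fun v ↦ le_antisymm ((hu₀ v).trans h) (hx v)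
  simp [hzero] at hsum

/-- `ρ x_u = ∑_{v ∼ u} x_v ≤ deg u · x_{u₀}`, so every vertex of the level set has degree at
least `ρ t`. -/
lemma card_levelSet_mul_le_sum_degree (G : SimpleGraph V) [DecidableRel G.Adj] {ρ : ℝ}
    (hρ : 0 ≤ ρ) {x : V → ℝ} (heig : G.adjMatrix ℝ *ᵥ x = ρ • x) {u₀ : V}
    (hu₀ : ∀ v, x v ≤ x u₀) (hx₀ : 0 < x u₀) (t : ℝ) :
    (#{u | t * x u₀ ≤ x u} : ℝ) * (ρ * t) ≤ ∑ v, (G.degree v : ℝ) := by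
  have hdeg : ∀ u, t * x u₀ ≤ x u → ρ * t ≤ G.degree u := fun u hu ↦ by
    have hrow : ρ * x u = ∑ v ∈ G.neighborFinset u, x v := by
      rw [← SimpleGraph.adjMatrix_mulVec_apply, heig, Pi.smul_apply, smul_eq_mul]
    have hsum : ∑ v ∈ G.neighborFinset u, x v ≤ G.degree u * x u₀ := by
      grw [sum_le_sum fun v _ ↦ hu₀ v, sum_const, nsmul_eq_mul,
        SimpleGraph.card_neighborFinset_eq_degree]
    refine le_of_mul_le_mul_right ?_ hx₀
    calc ρ * t * x u₀ = ρ * (t * x u₀) := mul_assoc _ _ _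
      _ ≤ ρ * x u := mul_le_mul_of_nonneg_left hu hρ
      _ ≤ G.degree u * x u₀ := hrow ▸ hsum
  calc (#{u | t * x u₀ ≤ x u} : ℝ) * (ρ * t) = ∑ u with t * x u₀ ≤ x u, ρ * t := by
        rw [sum_const, nsmul_eq_mul]
    _ ≤ ∑ u with t * x u₀ ≤ x u, (G.degree u : ℝ) :=
        sum_le_sum fun u hu ↦ hdeg u (mem_filter.1 hu).2
    _ ≤ ∑ v, (G.degree v : ℝ) := sum_le_sum_of_subset_of_nonneg (subset_univ _) fun _ _ _ ↦ by
        positivity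

lemma two_mul_card_lt_sum_degree_of_le_card_levelSet [Nonempty V] (G : SimpleGraph V)
    [DecidableRel G.Adj] {D lam : ℕ} {ρ s : ℝ} (hs : 0 < s) (hρ : (2 * D + 1) * s ^ 10 ≤ ρ)
    {x : V → ℝ} (heig : G.adjMatrix ℝ *ᵥ x = ρ • x) {u₀ : V} (hu₀ : ∀ v, x v ≤ x u₀)
    (hx₀ : 0 < x u₀)
    (hL : s ^ ((lam : ℤ) - 10) * Fintype.card V ≤ #{u | (s ^ lam)⁻¹ * x u₀ ≤ x u}) :
    2 * D * Fintype.card V < ∑ v, G.degree v := by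
  have hρ₀ : 0 ≤ ρ := le_trans (by positivity) hρ
  have hlevel := card_levelSet_mul_le_sum_degree G hρ₀ heig hu₀ hx₀ (s ^ lam)⁻¹
  have hscale : s ^ ((lam : ℤ) - 10) * (s ^ lam)⁻¹ = (s ^ 10)⁻¹ := by
    rw [← zpow_natCast, ← _root_.zpow_neg, ← zpow_add₀ hs.ne', ← zpow_natCast, ← _root_.zpow_neg]
    ring_nf
  have hV : (0 : ℝ) < Fintype.card V := by exact_mod_cast Fintype.card_pos
  have : (2 * D * Fintype.card V : ℝ) < ∑ v, (G.degree v : ℝ) := calc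
    (2 * D * Fintype.card V : ℝ) < (2 * D + 1) * s ^ 10 * (s ^ 10)⁻¹ * Fintype.card V := by
      rw [mul_inv_cancel_right₀ (by positivity)]
      nlinarith
    _ ≤ ρ * (s ^ 10)⁻¹ * Fintype.card V := by gcongr
    _ = s ^ ((lam : ℤ) - 10) * Fintype.card V * (ρ * (s ^ lam)⁻¹) := by
      rw [← hscale]
      ring
    _ ≤ _ := (mul_le_mul_of_nonneg_right hL (by positivity)).trans hlevel
  exact_mod_cast this

end Spectral

lemma exists_le_sqrt_mul_sub {γ : ℕ} (hγ : 1 ≤ γ) (K : ℝ) :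
    ∃ N : ℕ, ∀ n ≥ N, K ≤ √((γ * (n - γ) : ℕ) : ℝ) := by
  refine ⟨γ + ⌈K ^ 2⌉₊, fun n hn ↦ (le_abs_self K).trans (Real.abs_le_sqrt ?_)⟩
  have : ⌈K ^ 2⌉₊ ≤ γ * (n - γ) := by nlinarith [Nat.sub_add_cancel (le_of_add_le_left hn)]
  exact (Nat.le_ceil _).trans (by exact_mod_cast this)

theorem statement11_general {ι : Type*} [Nonempty ι]
    (m : ι → ℕ) (ℋ : ∀ i, SimpleGraph (Fin (m i)))
    (hγ : 1 ≤ gammaFam m ℋ) (C : ℝ)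
    (hC : ∀ i, 2 * (m i : ℝ) ^ 3 < C ∧ 100 * ((ℋ i).edgeSet.ncard : ℝ) < C) :
    ∃ N : ℕ, ∀ n : ℕ, N ≤ n →
      ∀ G : SimpleGraph (Fin n), SubdivFreeFam m ℋ G →
      Real.sqrt ((gammaFam m ℋ * (n - gammaFam m ℋ) : ℕ) : ℝ) ≤ specRad G →
      ∀ x : Fin n → ℝ, (∀ v, 0 ≤ x v) → (∑ v, x v ^ 2) = 1 →
        adjMat G *ᵥ x = specRad G • x →
      ∀ u₀ : Fin n, (∀ v, x v ≤ x u₀) →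
      ∀ lam : ℕ, 1 ≤ lam →
        ((Lset x u₀ C lam).ncard : ℝ) < (10 * C) ^ ((lam : ℤ) - 10) * (n : ℝ) := by
  classical
  obtain ⟨i₀⟩ := ‹Nonempty ι›
  have hC₀ : 0 < 10 * C := by linarith [(hC i₀).1, show 0 ≤ 2 * (m i₀ : ℝ) ^ 3 by positivity]
  set D : ℕ := (Fintype.card (Fin (m i₀)) + 1) * 2 ^ (ℋ i₀).edgeSet.ncard
  obtain ⟨N, hN⟩ := exists_le_sqrt_mul_sub hγ ((2 * (D : ℝ) + 1) * (10 * C) ^ 10)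
  refine ⟨N, fun n hn G hfree hρ x hx hsum heig u₀ hu₀ lam _ ↦ ?_⟩
  by_contra! hL
  have : Nonempty (Fin n) := ⟨u₀⟩
  have hLset : Lset x u₀ C lam = ↑({u | ((10 * C) ^ lam)⁻¹ * x u₀ ≤ x u} : Finset (Fin n)) := by
    ext; simp [Lset]
  rw [hLset, Set.ncard_coe_finset] at hL
  rw [adjMat_eq_adjMatrix] at heig
  refine hfree i₀ (containsSubdiv_of_sum_degree_gt (ℋ i₀) ?_)
  exact two_mul_card_lt_sum_degree_of_le_card_levelSet G hC₀ ((hN n hn).trans hρ) heig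
    hu₀ (pos_of_forall_le_of_sum_sq_eq_one hx hu₀ hsum) (by simpa using hL)

theorem statement11 {ι : Type*} [Fintype ι] [Nonempty ι]
    (m : ι → ℕ) (ℋ : ∀ i, SimpleGraph (Fin (m i)))
    (hγ : 1 ≤ gammaFam m ℋ) (C : ℝ)
    (hC : ∀ i, 2 * (m i : ℝ) ^ 3 < C ∧ 100 * ((ℋ i).edgeSet.ncard : ℝ) < C) :
    ∃ N : ℕ, ∀ n : ℕ, N ≤ n →
      ∀ G : SimpleGraph (Fin n), SubdivFreeFam m ℋ G →
      Real.sqrt ((gammaFam m ℋ * (n - gammaFam m ℋ) : ℕ) : ℝ) ≤ specRad G →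
      ∀ x : Fin n → ℝ, (∀ v, 0 ≤ x v) → (∑ v, x v ^ 2) = 1 →
        adjMat G *ᵥ x = specRad G • x →
      ∀ u₀ : Fin n, (∀ v, x v ≤ x u₀) →
      ∀ lam : ℕ, 1 ≤ lam →
        ((Lset x u₀ C lam).ncard : ℝ) < (10 * C) ^ ((lam : ℤ) - 10) * (n : ℝ) :=
  statement11_general m ℋ hγ C hC

end SubdivPaper
end

section
/- Let 𝓗 be a finite nonempty family of finite simple graphs with γ_𝓗 ≥ 1. There exists N such that for every integer n ≥ N the following holds: if G is an n-vertex graph containing a set L of exactly γ_𝓗 vertices each of which has degree n−1 in G (i.e., each vertex of L is adjacent to all other vertices of G), then G is 𝓗-subdivision-free if and only if the induced subgraph G − L is Γ(𝓗)-subdivision-free. -/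
open Matrix

namespace SubdivPaper

variable {ι : Type*}

/-!
The equivalence holds for every `n`, so `N = 0` works. Write `γ = |L|`.

If `G - L` contains a subdivision of an induced subgraph `H[S]` with `|S| = |H| - γ`, send the
remaining `γ` vertices of `H` injectively into `L`: as these are universal, every edge of `H`
leaving `S` is realised by a single edge of `G`, which gives an `H`-subdivision in `G`.

Conversely, in an `H`-subdivision in `G` every host vertex `x` can be charged to at most one
vertex of `H`: the branch vertex at `x`, or an end of the unique path having `x` as an internal
vertex. Deleting the at most `γ` vertices charged by `L` leaves a subdivision in `G - L` of an
induced subgraph of `H` on at least `|H| - γ` vertices, hence of one on exactly `|H| - γ`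
vertices, and an edge-minimal such induced subgraph is irreducible.
-/

section

open SimpleGraph Finset Function

variable {V V' W W' : Type*} {G : SimpleGraph V} {G' : SimpleGraph V'}
  {H : SimpleGraph W} {H' : SimpleGraph W'} {a b : V}

lemma walkInternal_map (f : G →g G') (hf : Injective f) (p : G.Walk a b) :
    WalkInternal (p.map f) = f '' WalkInternal p := by
  ext w
  simp only [WalkInternal, Walk.support_map, List.mem_map, Set.mem_ofPred_eq, Set.mem_image]
  constructor
  · rintro ⟨⟨x, hx, rfl⟩, hxa, hxb⟩
    exact ⟨x, ⟨hx, fun h => hxa (h ▸ rfl), fun h => hxb (h ▸ rfl)⟩, rfl⟩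
  · rintro ⟨x, ⟨hx, hxa, hxb⟩, rfl⟩
    exact ⟨⟨x, hx, rfl⟩, hf.ne hxa, hf.ne hxb⟩

lemma walkInternal_copy {a' b' : V} (p : G.Walk a b) (ha : a = a') (hb : b = b') :
    WalkInternal (p.copy ha hb) = WalkInternal p := by
  subst ha hb
  rfl

lemma walkInternal_cons_nil (h : G.Adj a b) : WalkInternal (Walk.cons h Walk.nil) = ∅ := by
  ext w
  simp only [WalkInternal, Walk.support_cons, Walk.support_nil, List.mem_cons,
    List.not_mem_nil, or_false, Set.mem_ofPred_eq, Set.mem_empty_iff_false, iff_false]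
  tauto

lemma walkInternal_induce {s : Set V} (p : G.Walk a b) (hp : ∀ x ∈ p.support, x ∈ s) {x : s} :
    x ∈ WalkInternal (p.induce s hp) ↔ (x : V) ∈ WalkInternal p := by
  simp [WalkInternal, Subtype.ext_iff]

structure Subdivision (G : SimpleGraph V) (H : SimpleGraph W) where
  branch : W → V
  branch_injective : Injective branch
  path : ∀ ⦃u v : W⦄, H.Adj u v → G.Walk (branch u) (branch v)
  isPath : ∀ ⦃u v : W⦄ (h : H.Adj u v), (path h).IsPath
  path_symm : ∀ ⦃u v : W⦄ (h : H.Adj u v), path h.symm = (path h).reverse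
  not_mem_range_of_mem_walkInternal :
    ∀ ⦃u v : W⦄ (h : H.Adj u v), ∀ x ∈ WalkInternal (path h), x ∉ Set.range branch
  walkInternal_inter : ∀ ⦃u v u' v' : W⦄ (h : H.Adj u v) (h' : H.Adj u' v'),
    s(u, v) ≠ s(u', v') → WalkInternal (path h) ∩ WalkInternal (path h') = ∅

lemma containsSubdiv_iff_nonempty : ContainsSubdiv G H ↔ Nonempty (Subdivision G H) :=
  ⟨fun ⟨φ, hφ, P, h₁, h₂, h₃, h₄⟩ => ⟨⟨φ, hφ, P, h₁, h₂, h₃, h₄⟩⟩,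
    fun ⟨S⟩ => ⟨S.1, S.2, S.3, S.4, S.5, S.6, S.7⟩⟩

lemma sym2_mk_ne_of_injective {f : W' → W} (hf : Injective f) {u v u' v' : W'}
    (h : s(u, v) ≠ s(u', v')) : s(f u, f v) ≠ s(f u', f v') := by
  simpa only [Sym2.map_mk] using (Sym2.map.injective hf).ne h

lemma exists_injective_extend_of_card_compl_le [Fintype W] [DecidableEq W] {T : Finset W}
    {ψ : T → V} (hψ : Injective ψ) {L : Finset V} (hψL : ∀ u, ψ u ∉ L)
    (hcard : #Tᶜ ≤ #L) :
    ∃ φ : W → V, Injective φ ∧ (∀ u (hu : u ∈ T), φ u = ψ ⟨u, hu⟩) ∧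
      ∀ u ∉ T, φ u ∈ L := by
  obtain ⟨g⟩ : Nonempty (↥Tᶜ ↪ ↥L) :=
    Function.Embedding.nonempty_of_card_le (by rwa [Fintype.card_coe, Fintype.card_coe])
  let φ : W → V := fun u => if hu : u ∈ T then ψ ⟨u, hu⟩ else g ⟨u, mem_compl.2 hu⟩
  have hφT : ∀ u (hu : u ∈ T), φ u = ψ ⟨u, hu⟩ := fun u hu => dif_pos hu
  have hφL : ∀ u ∉ T, φ u ∈ L := fun u hu => by simp only [φ, dif_neg hu, coe_mem]
  refine ⟨φ, fun u v huv => ?_, hφT, hφL⟩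
  by_cases hu : u ∈ T <;> by_cases hv : v ∈ T
  · rw [hφT u hu, hφT v hv] at huv
    exact congrArg Subtype.val (hψ huv)
  · exact absurd (huv ▸ hφL v hv) (hφT u hu ▸ hψL _)
  · exact absurd (huv ▸ hφL u hu) (hφT v hv ▸ hψL _)
  · simp only [φ, dif_neg hu, dif_neg hv] at huv
    exact congrArg Subtype.val (g.injective (Subtype.ext huv))

namespace Subdivision

def comap (S : Subdivision G H) (f : H' →g H) (hf : Injective f) : Subdivision G H' where
  branch := S.branch ∘ f
  branch_injective := S.branch_injective.comp hf
  path _ _ h := S.path (f.map_adj h)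
  isPath _ _ _ := S.isPath _
  path_symm _ _ h := S.path_symm (f.map_adj h)
  not_mem_range_of_mem_walkInternal _ _ _ x hx := fun ⟨z, hz⟩ =>
    S.not_mem_range_of_mem_walkInternal _ x hx ⟨f z, hz⟩
  walkInternal_inter _ _ _ _ _ _ hne :=
    S.walkInternal_inter _ _ (sym2_mk_ne_of_injective hf hne)

def map (S : Subdivision G H) (f : G →g G') (hf : Injective f) : Subdivision G' H where
  branch := f ∘ S.branch
  branch_injective := hf.comp S.branch_injective
  path _ _ h := (S.path h).map f
  isPath _ _ h := (S.isPath h).map hf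
  path_symm _ _ h := by
    simp only [Walk.reverse_map, ← S.path_symm]
  not_mem_range_of_mem_walkInternal _ _ h x hx := by
    rw [walkInternal_map f hf] at hx
    obtain ⟨y, hy, rfl⟩ := hx
    exact fun ⟨z, hz⟩ => S.not_mem_range_of_mem_walkInternal h y hy ⟨z, hf hz⟩
  walkInternal_inter _ _ _ _ h h' hne := by
    rw [walkInternal_map f hf, walkInternal_map f hf, ← Set.image_inter hf,
      S.walkInternal_inter h h' hne, Set.image_empty]

def restrict (S : Subdivision G H) (s : Set V) (hbranch : ∀ u, S.branch u ∈ s)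
    (hpath : ∀ ⦃u v : W⦄ (h : H.Adj u v), ∀ x ∈ (S.path h).support, x ∈ s) :
    Subdivision (G.induce s) H where
  branch u := ⟨S.branch u, hbranch u⟩
  branch_injective _ _ h := S.branch_injective (congrArg Subtype.val h)
  path _ _ h := (S.path h).induce s (hpath h)
  isPath _ _ h := by
    rw [Walk.isPath_def, Walk.support_induce]
    exact List.Nodup.of_map Subtype.val (by simpa using (S.isPath h).support_nodup)
  path_symm _ _ h := by
    apply Walk.ext_support
    simp [Walk.support_induce, S.path_symm h, List.attachWith_reverse]
  not_mem_range_of_mem_walkInternal _ _ h x hx := fun ⟨z, hz⟩ =>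
    S.not_mem_range_of_mem_walkInternal h x ((walkInternal_induce _ _).1 hx)
      ⟨z, congrArg Subtype.val hz⟩
  walkInternal_inter _ _ _ _ h h' hne := by
    ext x
    simp only [Set.mem_inter_iff, walkInternal_induce, Set.mem_empty_iff_false, iff_false]
    exact fun hx => (S.walkInternal_inter h h' hne).subset hx

lemma mem_walkInternal_of_not_mem_range (S : Subdivision G H) {u v : W} (h : H.Adj u v)
    {x : V} (hx : x ∈ (S.path h).support) (hr : x ∉ Set.range S.branch) :
    x ∈ WalkInternal (S.path h) :=
  ⟨hx, fun e => hr ⟨u, e.symm⟩, fun e => hr ⟨v, e.symm⟩⟩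

lemma exists_owner (S : Subdivision G H) (x : V) :
    ∃ X : Finset W, #X ≤ 1 ∧ (∀ u, S.branch u = x → u ∈ X) ∧
      ∀ ⦃u v : W⦄ (h : H.Adj u v), x ∈ (S.path h).support → u ∈ X ∨ v ∈ X := by
  by_cases hx : x ∈ Set.range S.branch
  · obtain ⟨w, rfl⟩ := hx
    refine ⟨{w}, by simp, fun u hu => by simp [S.branch_injective hu], fun u v h hw => ?_⟩
    have hend : S.branch w = S.branch u ∨ S.branch w = S.branch v := by
      by_contra! hne
      exact S.not_mem_range_of_mem_walkInternal h _ ⟨hw, hne⟩ ⟨w, rfl⟩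
    simpa [S.branch_injective.eq_iff, eq_comm] using hend
  by_cases hon : ∃ (u₀ v₀ : W) (h₀ : H.Adj u₀ v₀), x ∈ (S.path h₀).support
  · obtain ⟨u₀, v₀, h₀, hx₀⟩ := hon
    refine ⟨{u₀}, by simp, fun u hu => absurd ⟨u, hu⟩ hx, fun u v h hxuv => ?_⟩
    have hsame : s(u, v) = s(u₀, v₀) := by
      by_contra hne
      exact (S.walkInternal_inter h h₀ hne).subset
        ⟨S.mem_walkInternal_of_not_mem_range h hxuv hx,
          S.mem_walkInternal_of_not_mem_range h₀ hx₀ hx⟩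
    rcases Sym2.eq_iff.1 hsame with ⟨rfl, -⟩ | ⟨-, rfl⟩ <;> simp
  · push Not at hon
    exact ⟨∅, by simp, fun u hu => absurd ⟨u, hu⟩ hx,
      fun u v h hxuv => absurd hxuv (hon u v h)⟩

lemma nonempty_extend_of_universal [Fintype W] [DecidableEq W] {T : Finset W}
    (S : Subdivision G (H.induce ↑T)) {L : Finset V}
    (hL : ∀ u ∈ L, ∀ v, v ≠ u → G.Adj u v) (hcard : #Tᶜ ≤ #L)
    (hbranch : ∀ u, S.branch u ∉ L)
    (hint : ∀ ⦃u v⦄ (h : (H.induce ↑T).Adj u v),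
      ∀ x ∈ WalkInternal (S.path h), x ∉ L) :
    Nonempty (Subdivision G H) := by
  obtain ⟨φ, hφ, hφT, hφL⟩ :=
    exists_injective_extend_of_card_compl_le S.branch_injective hbranch hcard
  have hadj : ∀ ⦃u v⦄, H.Adj u v → ¬(u ∈ T ∧ v ∈ T) → G.Adj (φ u) (φ v) := by
    intro u v h huv
    have hne : φ u ≠ φ v := hφ.ne h.ne
    by_cases hu : u ∈ T
    · exact (hL _ (hφL v fun hv => huv ⟨hu, hv⟩) _ hne).symm
    · exact hL _ (hφL u hu) _ hne.symm
  let P : ∀ ⦃u v⦄, H.Adj u v → G.Walk (φ u) (φ v) := fun u v h =>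
    if hc : u ∈ T ∧ v ∈ T then
      (S.path (u := ⟨u, hc.1⟩) (v := ⟨v, hc.2⟩) h).copy
        (hφT u hc.1).symm (hφT v hc.2).symm
    else .cons (hadj h hc) .nil
  have hP_inner : ∀ ⦃u v⦄ (h : H.Adj u v) (hc : u ∈ T ∧ v ∈ T),
      WalkInternal (P h) = WalkInternal (S.path (u := ⟨u, hc.1⟩) (v := ⟨v, hc.2⟩) h) := by
    intro u v h hc
    simp only [P, dif_pos hc, walkInternal_copy]
  have hP_outer : ∀ ⦃u v⦄ (h : H.Adj u v), ¬(u ∈ T ∧ v ∈ T) →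
      WalkInternal (P h) = ∅ := by
    intro u v h hc
    simp only [P, dif_neg hc, walkInternal_cons_nil]
  refine ⟨⟨φ, hφ, P, fun u v h => ?_, fun u v h => ?_, fun u v h x hx => ?_,
    fun u v u' v' h h' hne => ?_⟩⟩
  · by_cases hc : u ∈ T ∧ v ∈ T
    · simpa only [P, dif_pos hc, Walk.isPath_copy] using S.isPath _
    · simpa only [P, dif_neg hc, Walk.cons_isPath_iff, Walk.support_nil, List.mem_singleton]
        using ⟨Walk.IsPath.nil, hφ.ne h.ne⟩
  · by_cases hc : u ∈ T ∧ v ∈ T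
    · simp only [P, dif_pos hc, dif_pos hc.symm, Walk.reverse_copy]
      congr 1
      exact S.path_symm _
    · simp [P, dif_neg hc, dif_neg (mt And.symm hc)]
  · by_cases hc : u ∈ T ∧ v ∈ T
    · rw [hP_inner h hc] at hx
      rintro ⟨z, rfl⟩
      by_cases hz : z ∈ T
      · exact S.not_mem_range_of_mem_walkInternal _ _ hx ⟨⟨z, hz⟩, (hφT z hz).symm⟩
      · exact hint _ _ hx (hφL z hz)
    · rw [hP_outer h hc] at hx
      exact hx.elim
  · by_cases hc : u ∈ T ∧ v ∈ T
    · by_cases hc' : u' ∈ T ∧ v' ∈ T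
      · rw [hP_inner h hc, hP_inner h' hc']
        exact S.walkInternal_inter _ _ fun he => hne (by
          simpa only [Sym2.map_mk] using congrArg (Sym2.map Subtype.val) he)
      · rw [hP_outer h' hc', Set.inter_empty]
    · rw [hP_outer h hc, Set.empty_inter]

end Subdivision

lemma ContainsSubdiv.comap (hGH : ContainsSubdiv G H) (f : H' →g H) (hf : Injective f) :
    ContainsSubdiv G H' :=
  have ⟨S⟩ := containsSubdiv_iff_nonempty.1 hGH
  containsSubdiv_iff_nonempty.2 ⟨S.comap f hf⟩

lemma ContainsSubdiv.exists_induce_compl (hGH : ContainsSubdiv G H) (L : Finset V) :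
    ∃ X : Finset W, #X ≤ #L ∧ ContainsSubdiv (G.induce (↑L)ᶜ) (H.induce (↑X)ᶜ) := by
  classical
  obtain ⟨S⟩ := containsSubdiv_iff_nonempty.1 hGH
  choose owner hcard hbranch hpath using S.exists_owner
  refine ⟨L.biUnion owner, ?_, containsSubdiv_iff_nonempty.2
    ⟨(S.comap (Embedding.induce (G := H) _).toHom (Embedding.induce (G := H) _).injective)
      |>.restrict _ ?_ ?_⟩⟩
  · calc #(L.biUnion owner) ≤ ∑ x ∈ L, #(owner x) := card_biUnion_le
      _ ≤ ∑ _x ∈ L, 1 := sum_le_sum fun x _ => hcard x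
      _ = #L := by simp
  · rintro ⟨u, hu⟩ hx
    exact hu (mem_biUnion.2 ⟨_, hx, hbranch _ u rfl⟩)
  · rintro ⟨u, hu⟩ ⟨v, hv⟩ h x hx hxL
    rcases hpath x h hx with h' | h'
    · exact hu (mem_biUnion.2 ⟨x, hxL, h'⟩)
    · exact hv (mem_biUnion.2 ⟨x, hxL, h'⟩)

lemma ContainsSubdiv.of_induce_compl_of_universal [Fintype W] [DecidableEq W] {L : Finset V}
    (hL : ∀ u ∈ L, ∀ v, v ≠ u → G.Adj u v) {T : Finset W} (hcard : #Tᶜ ≤ #L)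
    (hT : ContainsSubdiv (G.induce (↑L)ᶜ) (H.induce ↑T)) : ContainsSubdiv G H := by
  obtain ⟨S⟩ := containsSubdiv_iff_nonempty.1 hT
  refine containsSubdiv_iff_nonempty.2 <|
    (S.map (Embedding.induce _).toHom (Embedding.induce (G := G) _).injective)
      |>.nonempty_extend_of_universal hL hcard (fun u => (S.branch u).2) fun u v h x hx => ?_
  change x ∈ WalkInternal ((S.path h).map _) at hx
  rw [walkInternal_map _ (Embedding.induce (G := G) _).injective] at hx
  obtain ⟨y, -, rfl⟩ := hx
  exact y.2

lemma exists_irreducibleInduced_of_containsSubdiv {X : Type*} {Q : SimpleGraph X} {h s : ℕ}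
    {H : SimpleGraph (Fin h)} {S : Finset (Fin h)} (hS : #S = s)
    (hQ : ContainsSubdiv Q (H.induce ↑S)) :
    ∃ T : Finset (Fin h), IrreducibleInduced H s T ∧ ContainsSubdiv Q (H.induce ↑T) := by
  classical
  let C : Finset (Finset (Fin h)) := {T | #T = s ∧ ContainsSubdiv Q (H.induce ↑T)}
  obtain ⟨T, hTC, hTmin⟩ :=
    C.exists_min_image (fun T => (H.induce (T : Set (Fin h))).edgeSet.ncard)
      ⟨S, by simp [C, hS, hQ]⟩
  simp only [C, mem_filter, mem_univ, true_and] at hTC hTmin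
  refine ⟨T, ⟨hTC.1, ?_⟩, hTC.2⟩
  rintro ⟨T', B', hT', hle, hne, ⟨e⟩⟩
  have hT'Q : ContainsSubdiv Q (H.induce ↑T') :=
    (hTC.2.comap (Hom.ofLE hle) injective_id).comap e.toEmbedding.toHom e.injective
  have hedges : (H.induce (T' : Set (Fin h))).edgeSet.ncard = B'.edgeSet.ncard :=
    Nat.card_congr e.mapEdgeSet
  have hlt : B'.edgeSet.ncard < (H.induce (T : Set (Fin h))).edgeSet.ncard :=
    Set.ncard_lt_ncard (edgeSet_ssubset_edgeSet.2 (lt_of_le_of_ne hle hne))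
  exact (hTmin T' ⟨hT', hT'Q⟩).not_gt (hedges ▸ hlt)

end

theorem statement17_general {ι : Type*}
    (m : ι → ℕ) (ℋ : ∀ i, SimpleGraph (Fin (m i))) :
    ∃ N : ℕ, ∀ n : ℕ, N ≤ n →
      ∀ G : SimpleGraph (Fin n), ∀ L : Finset (Fin n), L.card = gammaFam m ℋ →
        (∀ u ∈ L, ∀ v : Fin n, v ≠ u → G.Adj u v) →
        (SubdivFreeFam m ℋ G ↔
          GammaFree m ℋ (SimpleGraph.induce ((L : Set (Fin n))ᶜ) G)) := by
  refine ⟨0, fun n _ G L hL hLuniv => ⟨fun hfree i S hS hsub => ?_, fun hfree i hsub => ?_⟩⟩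
  · refine hfree i (hsub.of_induce_compl_of_universal hLuniv ?_)
    rw [Finset.card_compl, Fintype.card_fin, hS.1, hL]
    omega
  · obtain ⟨X, hX, hXsub⟩ := hsub.exists_induce_compl L
    obtain ⟨S, hSX, hS⟩ := Finset.exists_subset_card_eq (s := Xᶜ) (n := m i - gammaFam m ℋ)
      (by rw [Finset.card_compl, Fintype.card_fin]; omega)
    have hSX' : (S : Set (Fin (m i))) ⊆ (↑X)ᶜ := by
      rw [← Finset.coe_compl]
      exact Finset.coe_subset.2 hSX
    let incl := SimpleGraph.induceHomOfLE (ℋ i) hSX'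
    obtain ⟨T, hT, hTsub⟩ :=
      exists_irreducibleInduced_of_containsSubdiv hS (hXsub.comap incl.toHom incl.injective)
    exact hfree i T hT hTsub

theorem statement17 {ι : Type*} [Fintype ι] [Nonempty ι]
    (m : ι → ℕ) (ℋ : ∀ i, SimpleGraph (Fin (m i)))
    (hγ : 1 ≤ gammaFam m ℋ) :
    ∃ N : ℕ, ∀ n : ℕ, N ≤ n →
      ∀ G : SimpleGraph (Fin n), ∀ L : Finset (Fin n), L.card = gammaFam m ℋ →
        (∀ u ∈ L, ∀ v : Fin n, v ≠ u → G.Adj u v) →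
        (SubdivFreeFam m ℋ G ↔
          GammaFree m ℋ (SimpleGraph.induce ((L : Set (Fin n))ᶜ) G)) :=
  statement17_general m ℋ

end SubdivPaper
end

section
/- For all integers r ≥ 3, ℓ ≥ 1, k ≥ 2 and all sufficiently large n: the generalized book B_{r−2, n−r+2} is {K_r}-subdivision-saturated, B_{ℓ, n−ℓ} is {C_{2ℓ+1}}-subdivision-saturated, and B_{k−1, n−k+1} is {P_{2k}}-subdivision-saturated. -/
open Matrix

namespace SubdivPaper

variable {ι : Type*}

section Aux
open SimpleGraph


lemma getVert_mem_support {V} {G : SimpleGraph V} {a b : V} (p : G.Walk a b) (i : ℕ) :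
    p.getVert i ∈ p.support := by
  rw [SimpleGraph.Walk.mem_support_iff_exists_getVert]
  rcases le_or_gt i p.length with h | h
  · exact ⟨i, rfl, h⟩
  · exact ⟨p.length, by rw [Walk.getVert_length, Walk.getVert_of_length_le _ h.le], le_rfl⟩

lemma getVert_injOn {V} {G : SimpleGraph V} {a b : V} {p : G.Walk a b} (hp : p.IsPath)
    {i j : ℕ} (hi : i ≤ p.length) (hj : j ≤ p.length) (h : p.getVert i = p.getVert j) : i = j := by
  induction p generalizing i j with
  | nil => simp only [Walk.length_nil] at hi hj; omega
  | @cons a c b hadj q ih =>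
    rw [Walk.cons_isPath_iff] at hp
    simp only [Walk.length_cons] at hi hj
    cases i with
    | zero =>
      cases j with
      | zero => rfl
      | succ j =>
        rw [Walk.getVert_zero, Walk.getVert_cons_succ] at h
        exact absurd (h ▸ getVert_mem_support q j) hp.2
    | succ i =>
      cases j with
      | zero =>
        rw [Walk.getVert_zero, Walk.getVert_cons_succ] at h
        exact absurd (h ▸ getVert_mem_support q i) hp.2
      | succ j =>
        rw [Walk.getVert_cons_succ, Walk.getVert_cons_succ] at h
        have := ih hp.1 (by omega) (by omega) h
        omega

lemma length_pos_of_ne {V} {G : SimpleGraph V} {a b : V} (p : G.Walk a b) (hab : a ≠ b) :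
    0 < p.length := by
  rcases Nat.eq_zero_or_pos p.length with h | h
  · exact absurd (p.eq_of_length_eq_zero h) hab
  · exact h

/-- Key case analysis: the successor vertex is internal or is the endpoint. -/
lemma succ_cases {V} {G : SimpleGraph V} {a b : V} {p : G.Walk a b} (hp : p.IsPath)
    {i : ℕ} (hi : i < p.length) :
    p.getVert (i + 1) ∈ WalkInternal p ∨ (i + 1 = p.length ∧ p.getVert (i + 1) = b) := by
  rcases eq_or_ne (i + 1) p.length with h | h
  · exact Or.inr ⟨h, h ▸ p.getVert_length⟩
  · refine Or.inl ⟨getVert_mem_support p (i + 1), ?_, ?_⟩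
    · intro hc
      have : i + 1 = 0 := getVert_injOn hp (by omega) (by omega)
        (by rw [hc, Walk.getVert_zero])
      omega
    · intro hc
      exact h (getVert_injOn hp (by omega) le_rfl (by rw [hc, Walk.getVert_length]))

lemma containsSubdiv_of_hom {V W : Type*} {G : SimpleGraph V} {H : SimpleGraph W}
    (f : W → V) (hinj : Function.Injective f)
    (hadj : ∀ ⦃u v⦄, H.Adj u v → G.Adj (f u) (f v)) : ContainsSubdiv G H := by
  classical
  refine ⟨f, hinj, fun u v h => Walk.cons (hadj h) Walk.nil, ?_, ?_, ?_, ?_⟩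
  · intro u v h
    simp [Walk.isPath_def, (hadj h).ne]
  · intro u v h
    simp [Walk.reverse_cons]
  · intro u v h w hw
    rcases hw with ⟨hw, hwa, hwb⟩
    simp only [Walk.support_cons, Walk.support_nil, List.mem_cons, List.mem_singleton,
      List.not_mem_nil, or_false] at hw
    rcases hw with rfl | rfl
    · exact absurd rfl hwa
    · exact absurd rfl hwb
  · intro u v u' v' h h' hne
    ext w
    simp only [Set.mem_inter_iff, Set.mem_empty_iff_false, iff_false, not_and]
    intro ⟨hw, hwa, hwb⟩
    simp only [Walk.support_cons, Walk.support_nil, List.mem_cons, List.mem_singleton,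
      List.not_mem_nil, or_false] at hw
    rcases hw with rfl | rfl
    · exact absurd rfl hwa
    · exact absurd rfl hwb

lemma book_adj {s t : ℕ} {u v : Fin (s + t)} :
    (book s t).Adj u v ↔ u ≠ v ∧ ((u : ℕ) < s ∨ (v : ℕ) < s) := by
  simp only [book, SimpleGraph.fromRel_adj]
  tauto

lemma addEdge_adj {V : Type*} (G : SimpleGraph V) (u v a b : V) :
    (addEdge G u v).Adj a b ↔ G.Adj a b ∨ (s(a, b) = s(u, v) ∧ a ≠ b) := by
  simp [addEdge, SimpleGraph.fromEdgeSet_adj]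


lemma succ_mod_cases {m a b : ℕ} (ha : a < m) (h : (a + 1) % m = b) :
    (b = a + 1 ∧ a + 1 < m) ∨ (a = m - 1 ∧ b = 0) := by
  rcases Nat.lt_or_ge (a + 1) m with h1 | h1
  · exact Or.inl ⟨by rw [← h, Nat.mod_eq_of_lt h1], h1⟩
  · have h2 : a + 1 = m := by omega
    exact Or.inr ⟨by omega, by rw [← h, h2, Nat.mod_self]⟩

lemma cycle_adj_of_succ {m : ℕ} (hm : 2 ≤ m) {u v : Fin m} (h : ((u : ℕ) + 1) % m = v) :
    (cycleGraph m).Adj u v := by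
  rw [cycleGraph_adj']
  right
  rw [Fin.sub_def]
  simp only
  rcases succ_mod_cases u.isLt h with ⟨hv, hlt⟩ | ⟨hu, hv⟩
  · have h2 : (m - (u : ℕ)) + (v : ℕ) = m + 1 := by omega
    rw [h2, Nat.add_mod_left, Nat.mod_eq_of_lt hm]
  · have h2 : (m - (u : ℕ)) + (v : ℕ) = 1 := by omega
    rw [h2, Nat.mod_eq_of_lt hm]

lemma succ_of_cycle_adj {m : ℕ} (hm : 2 ≤ m) {u v : Fin m} (h : (cycleGraph m).Adj u v) :
    ((u : ℕ) + 1) % m = (v : ℕ) ∨ ((v : ℕ) + 1) % m = (u : ℕ) := by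
  have key : ∀ a b : Fin m, (a - b).val = 1 → ((b : ℕ) + 1) % m = (a : ℕ) := by
    intro a b hab
    rw [Fin.sub_def] at hab
    simp only at hab
    have hb := b.isLt
    have ha := a.isLt
    have hd : 1 ≤ m - (b : ℕ) := by omega
    rcases Nat.lt_or_ge ((m - (b : ℕ)) + (a : ℕ)) m with h1 | h1
    · rw [Nat.mod_eq_of_lt h1] at hab
      -- m - b + a = 1 : so b = m - 1, a = 0
      have hb1 : (b : ℕ) = m - 1 := by omega
      have ha0 : (a : ℕ) = 0 := by omega
      rw [hb1, ha0]
      have : m - 1 + 1 = m := by omega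
      rw [this, Nat.mod_self]
    · have h2 : ((m - (b : ℕ)) + (a : ℕ)) % m = (m - (b : ℕ)) + (a : ℕ) - m := by
        rw [Nat.mod_eq_sub_mod h1, Nat.mod_eq_of_lt (by omega)]
      rw [h2] at hab
      have : (a : ℕ) = (b : ℕ) + 1 := by omega
      rw [← this, Nat.mod_eq_of_lt ha]
  rw [cycleGraph_adj'] at h
  rcases h with h | h
  · exact Or.inr (key _ _ h)
  · exact Or.inl (key _ _ h)

lemma card_filter_lt (s t : ℕ) :
    (Finset.univ.filter (fun x : Fin (s + t) => (x : ℕ) < s)).card = s := by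
  refine Finset.card_eq_of_bijective (fun i hi => ⟨i, by omega⟩) ?_ ?_ ?_
  · intro a ha
    rw [Finset.mem_filter] at ha
    exact ⟨(a : ℕ), ha.2, by ext; rfl⟩
  · intro i hi
    simp [Finset.mem_filter]
    exact hi
  · intro i j hi hj hij
    simpa [Fin.ext_iff] using hij

lemma card_filter_ge (s t : ℕ) :
    (Finset.univ.filter (fun x : Fin (s + t) => s ≤ (x : ℕ))).card = t := by
  have h1 := card_filter_lt s t
  have h2 : (Finset.univ.filter (fun x : Fin (s + t) => (x : ℕ) < s)).card
      + (Finset.univ.filter (fun x : Fin (s + t) => ¬ (x : ℕ) < s)).card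
      = Fintype.card (Fin (s + t)) := by
    rw [← Finset.card_univ]
    exact Finset.card_filter_add_card_filter_not _
  simp only [not_lt] at h2
  rw [Fintype.card_fin] at h2
  omega


lemma core_count {n : ℕ} (G : SimpleGraph (Fin n)) (K : Finset (Fin n))
    (hind : ∀ x y : Fin n, x ∉ K → y ∉ K → ¬ G.Adj x y)
    {h : ℕ} (H : SimpleGraph (Fin h))
    (E : Finset (Fin h × Fin h)) (D : Finset (Fin h))
    (hE : ∀ e ∈ E, H.Adj e.1 e.2)
    (hsym : ∀ e ∈ E, ∀ e' ∈ E, e ≠ e' → s(e.1, e.2) ≠ s(e'.1, e'.2))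
    (htip : ∀ e ∈ E, ∀ e' ∈ E, e.2 = e'.2 → e = e')
    (hinc : ∀ u : Fin h, ∃ e ∈ E, u = e.1 ∨ u = e.2)
    (hD : ∀ u ∈ D, ∃ e ∈ E, e.1 = u)
    (hsub : ContainsSubdiv G H) :
    h ≤ 2 * K.card + Dᶜ.card := by
  classical
  obtain ⟨φ, hφ, P, hpath, -, hint, hdisj⟩ := hsub
  set W : (e : {x // x ∈ E}) → G.Walk (φ e.1.1) (φ e.1.2) :=
    fun e => P (hE e.1 e.2) with hW
  -- the union of all supports
  set U : Finset (Fin n) := E.attach.biUnion (fun e => (W e).support.toFinset) with hU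
  have hmemU : ∀ (e : {x // x ∈ E}) (w : Fin n), w ∈ (W e).support → w ∈ U := by
    intro e w hw
    exact Finset.mem_biUnion.mpr ⟨e, Finset.mem_attach _ _, List.mem_toFinset.mpr hw⟩
  -- branch vertices are in U
  have hbranch : ∀ u : Fin h, φ u ∈ U := by
    intro u
    obtain ⟨e, he, hor⟩ := hinc u
    rcases hor with h1 | h1
    · exact hmemU ⟨e, he⟩ _ (h1 ▸ (W ⟨e, he⟩).start_mem_support)
    · exact hmemU ⟨e, he⟩ _ (h1 ▸ (W ⟨e, he⟩).end_mem_support)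
  have hcard1 : h ≤ U.card := by
    calc h = (Finset.univ.image φ).card := by
            rw [Finset.card_image_of_injective _ hφ, Finset.card_univ, Fintype.card_fin]
      _ ≤ U.card := Finset.card_le_card (by
            intro x hx
            obtain ⟨u, -, rfl⟩ := Finset.mem_image.mp hx
            exact hbranch u)
  set Pg : Finset (Fin n) := U.filter (fun x => x ∉ K) with hPg
  set Cl : Finset (Fin n) := U.filter (fun x => x ∈ K) with hCl
  have hsplit : Cl.card + Pg.card = U.card := Finset.card_filter_add_card_filter_not _
  have hClK : Cl.card ≤ K.card := Finset.card_le_card (fun x hx => (Finset.mem_filter.mp hx).2)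
  -- the exceptional set
  set Ex : Finset (Fin n) := Dᶜ.image φ with hEx
  -- witnesses
  set Q : Fin n → Prop := fun x =>
    ∃ p : {e // e ∈ E} × ℕ, p.2 < (W p.1).length ∧ (W p.1).getVert p.2 = x with hQ
  have hQall : ∀ x ∈ Pg \ Ex, Q x := by
    intro x hx
    rw [Finset.mem_sdiff] at hx
    obtain ⟨e, -, hsup⟩ := Finset.mem_biUnion.mp (Finset.mem_filter.mp hx.1).1
    rw [List.mem_toFinset, Walk.mem_support_iff_exists_getVert] at hsup
    obtain ⟨i, hgv, hilen⟩ := hsup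
    rcases lt_or_eq_of_le hilen with hlt | heq
    · exact ⟨⟨e, i⟩, hlt, hgv⟩
    · -- x is the endpoint φ e.1.2
      have hxφ : x = φ e.1.2 := by rw [← hgv, heq, Walk.getVert_length]
      by_cases hDe : e.1.2 ∈ D
      · obtain ⟨e', he', h1⟩ := hD _ hDe
        have hlen : 0 < (W ⟨e', he'⟩).length :=
          length_pos_of_ne _ (fun hc => (hE e' he').ne (hφ hc))
        exact ⟨⟨⟨e', he'⟩, 0⟩, hlen, by rw [Walk.getVert_zero, h1, ← hxφ]⟩
      · exact absurd (Finset.mem_image.mpr ⟨e.1.2, Finset.mem_compl.mpr hDe, hxφ.symm⟩)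
          (by exact fun hc => hx.2 hc)
  set f : Fin n → Fin n := fun x =>
    if hx : Q x then (W hx.choose.1).getVert (hx.choose.2 + 1) else x with hf
  -- basic facts about f on the domain
  have hfspec : ∀ x ∈ Pg \ Ex, ∃ (e : {e // e ∈ E}) (i : ℕ), i < (W e).length ∧
      (W e).getVert i = x ∧ f x = (W e).getVert (i + 1) := by
    intro x hx
    have hq := hQall x hx
    refine ⟨hq.choose.1, hq.choose.2, hq.choose_spec.1, hq.choose_spec.2, ?_⟩
    simp only [hf, dif_pos hq]
  have hfCl : ∀ x ∈ Pg \ Ex, f x ∈ Cl := by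
    intro x hx
    obtain ⟨e, i, hilen, hgv, hfx⟩ := hfspec x hx
    have hadj : G.Adj x (f x) := by
      rw [hfx, ← hgv]; exact (W e).adj_getVert_succ hilen
    have hxK : x ∉ K := (Finset.mem_filter.mp (Finset.mem_sdiff.mp hx).1).2
    have hfK : f x ∈ K := by
      by_contra hc
      exact hind x (f x) hxK hc hadj
    refine Finset.mem_filter.mpr ⟨?_, hfK⟩
    rw [hfx]
    exact hmemU e _ (getVert_mem_support _ _)
  -- injectivity
  have hinj : Set.InjOn f (Pg \ Ex : Finset (Fin n)) := by
    intro x hx y hy hxy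
    rw [Finset.mem_coe] at hx hy
    obtain ⟨e, i, hilen, hgvx, hfx⟩ := hfspec x hx
    obtain ⟨e', j, hjlen, hgvy, hfy⟩ := hfspec y hy
    have hc : (W e).getVert (i + 1) = (W e').getVert (j + 1) := by rw [← hfx, ← hfy, hxy]
    rcases eq_or_ne e e' with rfl | hee
    · have hp : (W e).IsPath := hpath _
      have hij : i + 1 = j + 1 :=
        getVert_injOn hp (by omega) (by omega) hc
      have hij' : i = j := by omega
      rw [← hgvx, ← hgvy, hij']
    · exfalso
      have hne : e.1 ≠ e'.1 := fun hc' => hee (Subtype.ext hc')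
      have hs : s(e.1.1, e.1.2) ≠ s(e'.1.1, e'.1.2) := hsym _ e.2 _ e'.2 hne
      rcases succ_cases (hpath (hE e.1 e.2)) hilen with hin | ⟨-, hend⟩ <;>
        rcases succ_cases (hpath (hE e'.1 e'.2)) hjlen with hin' | ⟨-, hend'⟩
      · have := hdisj (hE e.1 e.2) (hE e'.1 e'.2) hs
        exact Set.eq_empty_iff_forall_notMem.mp this _ ⟨hin, hc ▸ hin'⟩
      · exact hint (hE e.1 e.2) _ hin ⟨e'.1.2, by rw [← hend', ← hc]⟩
      · exact hint (hE e'.1 e'.2) _ hin' ⟨e.1.2, by rw [← hend, hc]⟩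
      · have : e.1.2 = e'.1.2 := hφ (by rw [← hend, ← hend', hc])
        exact hee (Subtype.ext (htip _ e.2 _ e'.2 this))
  have hcard2 : (Pg \ Ex).card ≤ Cl.card :=
    Finset.card_le_card_of_injOn f hfCl hinj
  have hcard3 : Pg.card ≤ Cl.card + Dᶜ.card :=
    calc Pg.card ≤ (Pg \ Ex).card + Ex.card := Finset.card_le_card_sdiff_add_card
      _ ≤ Cl.card + Dᶜ.card := Nat.add_le_add hcard2 Finset.card_image_le
  omega


lemma book_pages_nonadj {s t : ℕ} {x y : Fin (s + t)}
    (hx : ¬ (x : ℕ) < s) (hy : ¬ (y : ℕ) < s) : ¬ (book s t).Adj x y := by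
  rw [book_adj]
  tauto

lemma book_free_cycle {l t : ℕ} (hl : 1 ≤ l) :
    ¬ ContainsSubdiv (book l t) (cycleGraph (2 * l + 1)) := by
  intro hsub
  set m := 2 * l + 1 with hm
  have hm3 : 3 ≤ m := by omega
  have hcore := core_count (book l t)
    (Finset.univ.filter (fun x : Fin (l + t) => (x : ℕ) < l))
    (fun x y hx hy => book_pages_nonadj
      (by simpa using fun h => hx (Finset.mem_filter.mpr ⟨Finset.mem_univ _, h⟩))
      (by simpa using fun h => hy (Finset.mem_filter.mpr ⟨Finset.mem_univ _, h⟩)))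
    (cycleGraph m)
    (Finset.univ.filter (fun e : Fin m × Fin m => ((e.1 : ℕ) + 1) % m = (e.2 : ℕ)))
    Finset.univ ?_ ?_ ?_ ?_ ?_ hsub
  · rw [card_filter_lt, Finset.compl_univ, Finset.card_empty] at hcore
    omega
  · intro e he
    rw [Finset.mem_filter] at he
    exact cycle_adj_of_succ (by omega) he.2
  · intro e he e' he' hee hs
    rw [Finset.mem_filter] at he he'
    rw [Sym2.eq_iff] at hs
    rcases hs with ⟨h1, h2⟩ | ⟨h1, h2⟩
    · exact hee (Prod.ext h1 h2)
    · -- e.1 = e'.2, e.2 = e'.1 : two-cycle, impossible for m ≥ 3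
      have ha := he.2
      have hb := he'.2
      rw [← h1, ← h2] at hb
      -- ha : (e.1+1) % m = e.2, hb : (e.2+1) % m = e.1
      rcases succ_mod_cases e.1.isLt ha with ⟨u1, u2⟩ | ⟨u1, u2⟩ <;>
        rcases succ_mod_cases e.2.isLt hb with ⟨w1, w2⟩ | ⟨w1, w2⟩ <;> omega
  · intro e he e' he' h2
    rw [Finset.mem_filter] at he he'
    have ha := he.2
    have hb := he'.2
    rw [h2] at ha
    have : (e.1 : ℕ) = (e'.1 : ℕ) := by
      rcases succ_mod_cases e.1.isLt ha with ⟨u1, u2⟩ | ⟨u1, u2⟩ <;>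
        rcases succ_mod_cases e'.1.isLt hb with ⟨w1, w2⟩ | ⟨w1, w2⟩ <;> omega
    exact Prod.ext (Fin.ext this) h2
  · intro u
    refine ⟨(u, ⟨((u : ℕ) + 1) % m, Nat.mod_lt _ (by omega)⟩), ?_, Or.inl rfl⟩
    simp [Finset.mem_filter]
  · intro u _
    exact ⟨(u, ⟨((u : ℕ) + 1) % m, Nat.mod_lt _ (by omega)⟩), by simp [Finset.mem_filter], rfl⟩

lemma book_free_path {k t : ℕ} (hk : 2 ≤ k) :
    ¬ ContainsSubdiv (book (k - 1) t) (pathGraph (2 * k)) := by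
  intro hsub
  set m := 2 * k with hm
  have hcore := core_count (book (k - 1) t)
    (Finset.univ.filter (fun x : Fin (k - 1 + t) => (x : ℕ) < k - 1))
    (fun x y hx hy => book_pages_nonadj
      (by simpa using fun h => hx (Finset.mem_filter.mpr ⟨Finset.mem_univ _, h⟩))
      (by simpa using fun h => hy (Finset.mem_filter.mpr ⟨Finset.mem_univ _, h⟩)))
    (pathGraph m)
    (Finset.univ.filter (fun e : Fin m × Fin m => (e.1 : ℕ) + 1 = (e.2 : ℕ)))
    (Finset.univ.filter (fun u : Fin m => (u : ℕ) + 1 < m)) ?_ ?_ ?_ ?_ ?_ hsub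
  · rw [card_filter_lt] at hcore
    have hc1 : (Finset.univ.filter (fun u : Fin m => (u : ℕ) + 1 < m))ᶜ.card = 1 := by
      rw [Finset.card_eq_one]
      refine ⟨⟨m - 1, by omega⟩, ?_⟩
      ext x
      simp only [Finset.mem_compl, Finset.mem_filter, Finset.mem_univ, true_and, not_lt,
        Finset.mem_singleton, Fin.ext_iff]
      have := x.isLt
      omega
    rw [hc1] at hcore
    omega
  · intro e he
    rw [Finset.mem_filter] at he
    rw [pathGraph_adj]
    exact Or.inl he.2
  · intro e he e' he' hee hs
    rw [Finset.mem_filter] at he he'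
    rw [Sym2.eq_iff] at hs
    rcases hs with ⟨h1, h2⟩ | ⟨h1, h2⟩
    · exact hee (Prod.ext h1 h2)
    · rw [Fin.ext_iff] at h1 h2
      omega
  · intro e he e' he' h2
    rw [Finset.mem_filter] at he he'
    rw [Fin.ext_iff] at h2
    exact Prod.ext (Fin.ext (by omega)) (Fin.ext h2)
  · intro u
    rcases Nat.lt_or_ge ((u : ℕ) + 1) m with h1 | h1
    · exact ⟨(u, ⟨(u : ℕ) + 1, h1⟩), by simp [Finset.mem_filter], Or.inl rfl⟩
    · have hu := u.isLt
      refine ⟨(⟨(u : ℕ) - 1, by omega⟩, u), ?_, Or.inr rfl⟩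
      simp only [Finset.mem_filter, Finset.mem_univ, true_and]
      omega
  · intro u hu
    rw [Finset.mem_filter] at hu
    exact ⟨(u, ⟨(u : ℕ) + 1, hu.2⟩), by simp [Finset.mem_filter], rfl⟩


lemma book_free_top {r t : ℕ} (hr : 3 ≤ r) :
    ¬ ContainsSubdiv (book (r - 2) t) (⊤ : SimpleGraph (Fin r)) := by
  rintro ⟨φ, hφ, P, hpath, -, hint, hdisj⟩
  classical
  set B : Finset (Fin (r - 2 + t)) := Finset.univ.filter (fun x => (x : ℕ) < r - 2) with hB
  have hBcard : B.card = r - 2 := card_filter_lt (r - 2) t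
  have hclique : ∀ u : Fin r, (φ u : ℕ) < r - 2 := by
    intro u
    by_contra hu
    have hadj : ∀ v : Fin r, u ≠ v → (⊤ : SimpleGraph (Fin r)).Adj u v := fun v h => h
    set g : Fin r → Fin (r - 2 + t) := fun v =>
      if h : u ≠ v then (P (hadj v h)).getVert 1 else φ u with hg
    have hgeq : ∀ (v : Fin r) (h : u ≠ v), g v = (P (hadj v h)).getVert 1 := by
      intro v h
      simp only [hg]
      exact dif_pos h
    have hglen : ∀ (v : Fin r) (h : u ≠ v), 0 < (P (hadj v h)).length :=
      fun v h => length_pos_of_ne _ (hφ.ne h)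
    have hgadj : ∀ (v : Fin r) (h : u ≠ v), (book (r - 2) t).Adj (φ u) (g v) := by
      intro v h
      have h2 := (P (hadj v h)).adj_getVert_succ (hglen v h)
      rw [Walk.getVert_zero] at h2
      rw [hgeq v h]
      exact h2
    have hgB : ∀ v ∈ Finset.univ.erase u, g v ∈ B := by
      intro v hv
      have h : u ≠ v := (Finset.mem_erase.mp hv).1.symm
      rcases (book_adj.mp (hgadj v h)).2 with h1 | h1
      · exact absurd h1 hu
      · exact Finset.mem_filter.mpr ⟨Finset.mem_univ _, h1⟩
    have hginj : Set.InjOn g (Finset.univ.erase u : Finset (Fin r)) := by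
      intro v hv v' hv' hgv
      rw [Finset.mem_coe, Finset.mem_erase] at hv hv'
      have h : u ≠ v := hv.1.symm
      have h' : u ≠ v' := hv'.1.symm
      by_contra hne
      rw [hgeq v h, hgeq v' h'] at hgv
      rcases succ_cases (hpath (hadj v h)) (hglen v h) with hin | ⟨-, hend⟩ <;>
        rcases succ_cases (hpath (hadj v' h')) (hglen v' h') with hin' | ⟨-, hend'⟩
      · have hsne : s(u, v) ≠ s(u, v') := by
          intro hq
          rw [Sym2.eq_iff] at hq
          rcases hq with ⟨-, h2⟩ | ⟨h1, -⟩
          · exact hne h2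
          · exact h' h1
        exact Set.eq_empty_iff_forall_notMem.mp
          (hdisj (hadj v h) (hadj v' h') hsne) _ ⟨hin, hgv ▸ hin'⟩
      · exact hint (hadj v h) _ hin ⟨v', by rw [← hend', ← hgv]⟩
      · exact hint (hadj v' h') _ hin' ⟨v, by rw [← hend, hgv]⟩
      · exact hne (hφ (by rw [← hend, ← hend', hgv]))
    have hle := Finset.card_le_card_of_injOn g hgB hginj
    rw [Finset.card_erase_of_mem (Finset.mem_univ _), Finset.card_univ, Fintype.card_fin,
      hBcard] at hle
    omega
  have himg : ∀ u : Fin r, φ u ∈ B :=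
    fun u => Finset.mem_filter.mpr ⟨Finset.mem_univ _, hclique u⟩
  have hle2 := Finset.card_le_card_of_injOn φ (s := Finset.univ) (fun u _ => himg u) hφ.injOn
  rw [Finset.card_univ, Fintype.card_fin, hBcard] at hle2
  omega


-- an "addEdge" adjacency from a book edge
lemma addEdge_of_book {s t : ℕ} {u v a b : Fin (s + t)} (h : (book s t).Adj a b) :
    (addEdge (book s t) u v).Adj a b := by
  rw [addEdge_adj]; exact Or.inl h

lemma addEdge_new {s t : ℕ} {u v : Fin (s + t)} (huv : u ≠ v) :
    (addEdge (book s t) u v).Adj u v := by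
  rw [addEdge_adj]; exact Or.inr ⟨rfl, huv⟩


/-- saturation for `K_r` -/
lemma book_sat_top {r t : ℕ} (hr : 3 ≤ r) {u v : Fin (r - 2 + t)}
    (huv : u ≠ v) (hu : r - 2 ≤ (u : ℕ)) (hv : r - 2 ≤ (v : ℕ)) :
    ContainsSubdiv (addEdge (book (r - 2) t) u v) (⊤ : SimpleGraph (Fin r)) := by
  have hu' := u.isLt
  set f : Fin r → Fin (r - 2 + t) := fun j =>
    if (j : ℕ) < r - 2 then ⟨(j : ℕ), by omega⟩ else if (j : ℕ) = r - 2 then u else v with hf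
  have hval : ∀ j : Fin r, ((j : ℕ) < r - 2 ∧ (f j : ℕ) = (j : ℕ)) ∨
      ((j : ℕ) = r - 2 ∧ f j = u) ∨ ((j : ℕ) = r - 1 ∧ f j = v) := by
    intro j
    have hj := j.isLt
    simp only [hf]
    split_ifs with h1 h2
    · exact Or.inl ⟨h1, rfl⟩
    · exact Or.inr (Or.inl ⟨h2, rfl⟩)
    · exact Or.inr (Or.inr ⟨by omega, rfl⟩)
  refine containsSubdiv_of_hom f ?_ ?_
  · intro j j' hjj
    rcases hval j with ⟨h1, h2⟩ | ⟨h1, h2⟩ | ⟨h1, h2⟩ <;>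
      rcases hval j' with ⟨h1', h2'⟩ | ⟨h1', h2'⟩ | ⟨h1', h2'⟩ <;>
      first
        | (rw [h2, h2'] at hjj; exact absurd hjj huv)
        | (rw [h2, h2'] at hjj; exact absurd hjj.symm huv)
        | (have hv2 : (f j : ℕ) = (f j' : ℕ) := congrArg Fin.val hjj
           rw [h2, h2'] at *
           exact Fin.ext (by omega))
  · intro j j' hjj
    rw [SimpleGraph.top_adj] at hjj
    have hne : f j ≠ f j' := by
      intro hc
      rcases hval j with ⟨h1, h2⟩ | ⟨h1, h2⟩ | ⟨h1, h2⟩ <;>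
        rcases hval j' with ⟨h1', h2'⟩ | ⟨h1', h2'⟩ | ⟨h1', h2'⟩ <;>
        first
          | (rw [h2, h2'] at hc; exact huv hc)
          | (rw [h2, h2'] at hc; exact huv hc.symm)
          | (have hv2 : (f j : ℕ) = (f j' : ℕ) := congrArg Fin.val hc
             exact hjj (Fin.ext (by omega)))
    rcases hval j with ⟨h1, h2⟩ | ⟨h1, h2⟩ | ⟨h1, h2⟩ <;>
      rcases hval j' with ⟨h1', h2'⟩ | ⟨h1', h2'⟩ | ⟨h1', h2'⟩
    · exact addEdge_of_book (book_adj.mpr ⟨hne, Or.inl (by omega)⟩)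
    · exact addEdge_of_book (book_adj.mpr ⟨hne, Or.inl (by omega)⟩)
    · exact addEdge_of_book (book_adj.mpr ⟨hne, Or.inl (by omega)⟩)
    · exact addEdge_of_book (book_adj.mpr ⟨hne, Or.inr (by omega)⟩)
    · exact absurd (Fin.ext (h1.trans h1'.symm)) hjj
    · rw [h2, h2']; exact addEdge_new huv
    · exact addEdge_of_book (book_adj.mpr ⟨hne, Or.inr (by omega)⟩)
    · rw [h2, h2']; exact (addEdge_new huv).symm
    · exact absurd (Fin.ext (h1.trans h1'.symm)) hjj


/-- saturation for odd cycles -/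
lemma book_sat_cycle {l t : ℕ} (hl : 1 ≤ l) (ht : l + 1 ≤ t) {u v : Fin (l + t)}
    (huv : u ≠ v) (hu : l ≤ (u : ℕ)) (hv : l ≤ (v : ℕ)) :
    ContainsSubdiv (addEdge (book l t) u v) (cycleGraph (2 * l + 1)) := by
  classical
  set S : Finset (Fin (l + t)) :=
    ((Finset.univ.filter (fun x : Fin (l + t) => l ≤ (x : ℕ))).erase u).erase v with hS
  have hScard : l - 1 ≤ S.card := by
    have h1 := card_filter_ge l t
    have h2 := Finset.pred_card_le_card_erase
      (s := Finset.univ.filter (fun x : Fin (l + t) => l ≤ (x : ℕ))) (a := u)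
    have h3 := Finset.pred_card_le_card_erase
      (s := (Finset.univ.filter (fun x : Fin (l + t) => l ≤ (x : ℕ))).erase u) (a := v)
    rw [hS]
    omega
  obtain ⟨T, hTS, hTcard⟩ := Finset.exists_subset_card_eq hScard
  have hTprop : ∀ x ∈ T, l ≤ (x : ℕ) ∧ x ≠ u ∧ x ≠ v := by
    intro x hx
    have := hTS hx
    rw [hS, Finset.mem_erase, Finset.mem_erase, Finset.mem_filter] at this
    exact ⟨this.2.2.2, this.2.1, this.1⟩
  set em : Fin (l - 1) → Fin (l + t) := fun i => T.orderEmbOfFin hTcard i with hem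
  have hemT : ∀ i, em i ∈ T := fun i => T.orderEmbOfFin_mem hTcard i
  have heminj : Function.Injective em := (T.orderEmbOfFin hTcard).injective
  set pg : Fin (l + 1) → Fin (l + t) := fun i =>
    if h0 : (i : ℕ) = 0 then v else if hli : (i : ℕ) = l then u
    else em ⟨(i : ℕ) - 1, by omega⟩ with hpg
  have hpgval : ∀ i : Fin (l + 1), ((i : ℕ) = 0 ∧ pg i = v) ∨ ((i : ℕ) = l ∧ pg i = u) ∨
      (0 < (i : ℕ) ∧ (i : ℕ) < l ∧ pg i ∈ T) := by
    intro i
    have hi := i.isLt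
    simp only [hpg]
    split_ifs with h0 hli
    · exact Or.inl ⟨h0, rfl⟩
    · exact Or.inr (Or.inl ⟨hli, rfl⟩)
    · exact Or.inr (Or.inr ⟨by omega, by omega, hemT _⟩)
  have hval_v : ∀ i : Fin (l + 1), (i : ℕ) = 0 → pg i = v := by
    intro i hi
    rcases hpgval i with ⟨h1, h2⟩ | ⟨h1, h2⟩ | ⟨h1, h1b, h2⟩
    · exact h2
    · omega
    · omega
  have hval_u : ∀ i : Fin (l + 1), (i : ℕ) = l → pg i = u := by
    intro i hi
    rcases hpgval i with ⟨h1, h2⟩ | ⟨h1, h2⟩ | ⟨h1, h1b, h2⟩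
    · omega
    · exact h2
    · omega
  have hpgpage : ∀ i, l ≤ (pg i : ℕ) := by
    intro i
    rcases hpgval i with ⟨-, h⟩ | ⟨-, h⟩ | ⟨-, -, h⟩
    · rw [h]; exact hv
    · rw [h]; exact hu
    · exact (hTprop _ h).1
  have hpginj : Function.Injective pg := by
    intro i i' hii
    rcases hpgval i with ⟨h1, h2⟩ | ⟨h1, h2⟩ | ⟨h1, h1b, h2⟩ <;>
      rcases hpgval i' with ⟨h1', h2'⟩ | ⟨h1', h2'⟩ | ⟨h1', h1b', h2'⟩
    · exact Fin.ext (by omega)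
    · rw [h2, h2'] at hii; exact absurd hii.symm huv
    · exact absurd (by rw [← hii, h2]) (hTprop _ h2').2.2
    · rw [h2, h2'] at hii; exact absurd hii huv
    · exact Fin.ext (by omega)
    · exact absurd (by rw [← hii, h2]) (hTprop _ h2').2.1
    · exact absurd (by rw [hii, h2']) (hTprop _ h2).2.2
    · exact absurd (by rw [hii, h2']) (hTprop _ h2).2.1
    · simp only [hpg, dif_neg (by omega : ¬ (i : ℕ) = 0), dif_neg (by omega : ¬ (i : ℕ) = l),
        dif_neg (by omega : ¬ (i' : ℕ) = 0), dif_neg (by omega : ¬ (i' : ℕ) = l)] at hii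
      have h9 : (i : ℕ) - 1 = (i' : ℕ) - 1 := congrArg Fin.val (heminj hii)
      exact Fin.ext (by omega)
  set f : Fin (2 * l + 1) → Fin (l + t) := fun j =>
    if h2 : (j : ℕ) % 2 = 0 then pg ⟨(j : ℕ) / 2, by omega⟩ else ⟨(j : ℕ) / 2, by omega⟩
    with hf
  have hfeven : ∀ (j : Fin (2 * l + 1)), (j : ℕ) % 2 = 0 →
      f j = pg ⟨(j : ℕ) / 2, by omega⟩ := by
    intro j hj
    simp only [hf]
    rw [dif_pos hj]
  have hfodd : ∀ (j : Fin (2 * l + 1)), ¬ (j : ℕ) % 2 = 0 →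
      f j = ⟨(j : ℕ) / 2, by omega⟩ := by
    intro j hj
    simp only [hf]
    rw [dif_neg hj]
  refine containsSubdiv_of_hom f ?_ ?_
  · intro j j' hjj
    have hj := j.isLt
    have hj' := j'.isLt
    by_cases h2 : (j : ℕ) % 2 = 0 <;> by_cases h2' : (j' : ℕ) % 2 = 0
    · rw [hfeven j h2, hfeven j' h2'] at hjj
      have h9 : (j : ℕ) / 2 = (j' : ℕ) / 2 := congrArg Fin.val (hpginj hjj)
      exact Fin.ext (by omega)
    · rw [hfeven j h2, hfodd j' h2'] at hjj
      have h3 := hpgpage ⟨(j : ℕ) / 2, by omega⟩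
      rw [hjj] at h3
      have h4 : l ≤ (j' : ℕ) / 2 := h3
      exact Fin.ext (by omega)
    · rw [hfodd j h2, hfeven j' h2'] at hjj
      have h3 := hpgpage ⟨(j' : ℕ) / 2, by omega⟩
      rw [← hjj] at h3
      have h4 : l ≤ (j : ℕ) / 2 := h3
      exact Fin.ext (by omega)
    · rw [hfodd j h2, hfodd j' h2'] at hjj
      have h9 : (j : ℕ) / 2 = (j' : ℕ) / 2 := congrArg Fin.val hjj
      exact Fin.ext (by omega)
  · intro j j' hjj
    have hstep : ∀ a b : Fin (2 * l + 1), ((a : ℕ) + 1) % (2 * l + 1) = (b : ℕ) →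
        (addEdge (book l t) u v).Adj (f a) (f b) := by
      intro a b hab
      have ha := a.isLt
      have hb := b.isLt
      rcases succ_mod_cases ha hab with ⟨hb1, hlt⟩ | ⟨ha1, hb1⟩
      · by_cases h2 : (a : ℕ) % 2 = 0
        · rw [hfeven a h2, hfodd b (by omega)]
          refine addEdge_of_book (book_adj.mpr ⟨?_, Or.inr (show (b : ℕ) / 2 < l by omega)⟩)
          intro hc
          have h6 := hpgpage ⟨(a : ℕ) / 2, by omega⟩
          rw [hc] at h6
          have h7 : l ≤ (b : ℕ) / 2 := h6
          omega
        · rw [hfodd a h2, hfeven b (by omega)]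
          refine addEdge_of_book (book_adj.mpr ⟨?_, Or.inl (show (a : ℕ) / 2 < l by omega)⟩)
          intro hc
          have h6 := hpgpage ⟨(b : ℕ) / 2, by omega⟩
          rw [← hc] at h6
          have h7 : l ≤ (a : ℕ) / 2 := h6
          omega
      · have h2 : (a : ℕ) % 2 = 0 := by omega
        have h2' : (b : ℕ) % 2 = 0 := by omega
        have e1 : f a = u := by
          rw [hfeven a h2]
          exact hval_u _ (show (a : ℕ) / 2 = l by omega)
        have e2 : f b = v := by
          rw [hfeven b h2']
          exact hval_v _ (show (b : ℕ) / 2 = 0 by omega)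
        rw [e1, e2]
        exact addEdge_new huv
    rcases succ_of_cycle_adj (by omega) hjj with h | h
    · exact hstep _ _ h
    · exact (hstep _ _ h).symm

/-- saturation for paths -/
lemma book_sat_path {k t : ℕ} (hk : 2 ≤ k) (ht : k + 1 ≤ t) {u v : Fin (k - 1 + t)}
    (huv : u ≠ v) (hu : k - 1 ≤ (u : ℕ)) (hv : k - 1 ≤ (v : ℕ)) :
    ContainsSubdiv (addEdge (book (k - 1) t) u v) (pathGraph (2 * k)) := by
  classical
  set S : Finset (Fin (k - 1 + t)) :=
    ((Finset.univ.filter (fun x : Fin (k - 1 + t) => k - 1 ≤ (x : ℕ))).erase u).erase v with hS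
  have hScard : k - 1 ≤ S.card := by
    have h1 := card_filter_ge (k - 1) t
    have h2 := Finset.pred_card_le_card_erase
      (s := Finset.univ.filter (fun x : Fin (k - 1 + t) => k - 1 ≤ (x : ℕ))) (a := u)
    have h3 := Finset.pred_card_le_card_erase
      (s := (Finset.univ.filter (fun x : Fin (k - 1 + t) => k - 1 ≤ (x : ℕ))).erase u) (a := v)
    rw [hS]
    omega
  obtain ⟨T, hTS, hTcard⟩ := Finset.exists_subset_card_eq hScard
  have hTprop : ∀ x ∈ T, k - 1 ≤ (x : ℕ) ∧ x ≠ u ∧ x ≠ v := by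
    intro x hx
    have := hTS hx
    rw [hS, Finset.mem_erase, Finset.mem_erase, Finset.mem_filter] at this
    exact ⟨this.2.2.2, this.2.1, this.1⟩
  set em : Fin (k - 1) → Fin (k - 1 + t) := fun i => T.orderEmbOfFin hTcard i with hem
  have hemT : ∀ i, em i ∈ T := fun i => T.orderEmbOfFin_mem hTcard i
  have heminj : Function.Injective em := (T.orderEmbOfFin hTcard).injective
  set pg : Fin k → Fin (k - 1 + t) := fun i =>
    if h0 : (i : ℕ) = 0 then u else em ⟨(i : ℕ) - 1, by omega⟩ with hpg
  have hpgval : ∀ i : Fin k, ((i : ℕ) = 0 ∧ pg i = u) ∨ (0 < (i : ℕ) ∧ pg i ∈ T) := by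
    intro i
    simp only [hpg]
    split_ifs with h0
    · exact Or.inl ⟨h0, rfl⟩
    · exact Or.inr ⟨by omega, hemT _⟩
  have hval_u0 : ∀ i : Fin k, (i : ℕ) = 0 → pg i = u := by
    intro i hi
    rcases hpgval i with ⟨h1, h2⟩ | ⟨h1, h2⟩
    · exact h2
    · omega
  have hpgpage : ∀ i, k - 1 ≤ (pg i : ℕ) := by
    intro i
    rcases hpgval i with ⟨-, h⟩ | ⟨-, h⟩
    · rw [h]; exact hu
    · exact (hTprop _ h).1
  have hpgnv : ∀ i, pg i ≠ v := by
    intro i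
    rcases hpgval i with ⟨-, h⟩ | ⟨-, h⟩
    · rw [h]; exact huv
    · exact (hTprop _ h).2.2
  have hpginj : Function.Injective pg := by
    intro i i' hii
    rcases hpgval i with ⟨h1, h2⟩ | ⟨h1, h2⟩ <;>
      rcases hpgval i' with ⟨h1', h2'⟩ | ⟨h1', h2'⟩
    · exact Fin.ext (by omega)
    · exact absurd (by rw [← hii, h2]) (hTprop _ h2').2.1
    · exact absurd (by rw [hii, h2']) (hTprop _ h2).2.1
    · simp only [hpg, dif_neg (by omega : ¬ (i : ℕ) = 0),
        dif_neg (by omega : ¬ (i' : ℕ) = 0)] at hii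
      have h9 : (i : ℕ) - 1 = (i' : ℕ) - 1 := congrArg Fin.val (heminj hii)
      exact Fin.ext (by omega)
  set f : Fin (2 * k) → Fin (k - 1 + t) := fun j =>
    if h2 : (j : ℕ) % 2 = 1 then pg ⟨(j : ℕ) / 2, by omega⟩
    else if h0 : (j : ℕ) = 0 then v else ⟨(j : ℕ) / 2 - 1, by omega⟩ with hf
  have hfodd : ∀ (j : Fin (2 * k)), (j : ℕ) % 2 = 1 → f j = pg ⟨(j : ℕ) / 2, by omega⟩ := by
    intro j hj
    simp only [hf]
    rw [dif_pos hj]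
  have hfzero : ∀ (j : Fin (2 * k)), (j : ℕ) = 0 → f j = v := by
    intro j hj
    simp only [hf]
    rw [dif_neg (by omega), dif_pos hj]
  have hfeven : ∀ (j : Fin (2 * k)), (j : ℕ) % 2 = 0 → 0 < (j : ℕ) →
      f j = ⟨(j : ℕ) / 2 - 1, by omega⟩ := by
    intro j hj hj0
    simp only [hf]
    rw [dif_neg (by omega), dif_neg (by omega)]
  refine containsSubdiv_of_hom f ?_ ?_
  · intro j j' hjj
    have hj := j.isLt
    have hj' := j'.isLt
    by_cases h2 : (j : ℕ) % 2 = 1 <;> by_cases h2' : (j' : ℕ) % 2 = 1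
    · rw [hfodd j h2, hfodd j' h2'] at hjj
      have h9 : (j : ℕ) / 2 = (j' : ℕ) / 2 := congrArg Fin.val (hpginj hjj)
      exact Fin.ext (by omega)
    · by_cases h0' : (j' : ℕ) = 0
      · rw [hfodd j h2, hfzero j' h0'] at hjj
        exact absurd hjj (hpgnv _)
      · rw [hfodd j h2, hfeven j' (by omega) (by omega)] at hjj
        have h3 := hpgpage ⟨(j : ℕ) / 2, by omega⟩
        rw [hjj] at h3
        have h4 : k - 1 ≤ (j' : ℕ) / 2 - 1 := h3
        exact Fin.ext (by omega)
    · by_cases h0 : (j : ℕ) = 0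
      · rw [hfzero j h0, hfodd j' h2'] at hjj
        exact absurd hjj.symm (hpgnv _)
      · rw [hfeven j (by omega) (by omega), hfodd j' h2'] at hjj
        have h3 := hpgpage ⟨(j' : ℕ) / 2, by omega⟩
        rw [← hjj] at h3
        have h4 : k - 1 ≤ (j : ℕ) / 2 - 1 := h3
        exact Fin.ext (by omega)
    · by_cases h0 : (j : ℕ) = 0 <;> by_cases h0' : (j' : ℕ) = 0
      · exact Fin.ext (by omega)
      · rw [hfzero j h0, hfeven j' (by omega) (by omega)] at hjj
        have h9 : (v : ℕ) = (j' : ℕ) / 2 - 1 := congrArg Fin.val hjj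
        exact Fin.ext (by omega)
      · rw [hfeven j (by omega) (by omega), hfzero j' h0'] at hjj
        have h9 : (j : ℕ) / 2 - 1 = (v : ℕ) := congrArg Fin.val hjj
        exact Fin.ext (by omega)
      · rw [hfeven j (by omega) (by omega), hfeven j' (by omega) (by omega)] at hjj
        have h9 : (j : ℕ) / 2 - 1 = (j' : ℕ) / 2 - 1 := congrArg Fin.val hjj
        exact Fin.ext (by omega)
  · intro j j' hjj
    rw [SimpleGraph.pathGraph_adj] at hjj
    have hstep : ∀ a b : Fin (2 * k), (a : ℕ) + 1 = (b : ℕ) →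
        (addEdge (book (k - 1) t) u v).Adj (f a) (f b) := by
      intro a b hab
      have ha := a.isLt
      have hb := b.isLt
      by_cases h0 : (a : ℕ) = 0
      · have e2 : f b = u := by
          rw [hfodd b (by omega)]
          exact hval_u0 _ (show (b : ℕ) / 2 = 0 by omega)
        rw [hfzero a h0, e2]
        exact (addEdge_new huv).symm
      · by_cases h2 : (a : ℕ) % 2 = 1
        · rw [hfodd a h2, hfeven b (by omega) (by omega)]
          refine addEdge_of_book (book_adj.mpr
            ⟨?_, Or.inr (show (b : ℕ) / 2 - 1 < k - 1 by omega)⟩)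
          intro hc
          have h6 := hpgpage ⟨(a : ℕ) / 2, by omega⟩
          rw [hc] at h6
          have h7 : k - 1 ≤ (b : ℕ) / 2 - 1 := h6
          omega
        · rw [hfeven a (by omega) (by omega), hfodd b (by omega)]
          refine addEdge_of_book (book_adj.mpr
            ⟨?_, Or.inl (show (a : ℕ) / 2 - 1 < k - 1 by omega)⟩)
          intro hc
          have h6 := hpgpage ⟨(b : ℕ) / 2, by omega⟩
          rw [← hc] at h6
          have h7 : k - 1 ≤ (a : ℕ) / 2 - 1 := h6
          omega
    rcases hjj with h | h
    · exact hstep _ _ h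
    · exact (hstep _ _ h).symm


end Aux

theorem statement18 (r l k : ℕ) (hr : 3 ≤ r) (hl : 1 ≤ l) (hk : 2 ≤ k) :
    ∃ N : ℕ, ∀ n : ℕ, N ≤ n →
      SubdivSatSingle (⊤ : SimpleGraph (Fin r)) (book (r - 2) (n - (r - 2))) ∧
      SubdivSatSingle (SimpleGraph.cycleGraph (2 * l + 1)) (book l (n - l)) ∧
      SubdivSatSingle (SimpleGraph.pathGraph (2 * k)) (book (k - 1) (n - (k - 1))) := by
  refine ⟨r + 2 * l + 2 * k + 3, fun n hn => ⟨⟨?_, ?_⟩, ⟨?_, ?_⟩, ⟨?_, ?_⟩⟩⟩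
  · exact book_free_top hr
  · intro u v huv hnadj
    rw [book_adj] at hnadj
    push_neg at hnadj
    obtain ⟨h1, h2⟩ := hnadj huv
    exact book_sat_top hr huv h1 h2
  · exact book_free_cycle hl
  · intro u v huv hnadj
    rw [book_adj] at hnadj
    push_neg at hnadj
    obtain ⟨h1, h2⟩ := hnadj huv
    exact book_sat_cycle hl (by omega) huv h1 h2
  · exact book_free_path hk
  · intro u v huv hnadj
    rw [book_adj] at hnadj
    push_neg at hnadj
    obtain ⟨h1, h2⟩ := hnadj huv
    exact book_sat_path hk (by omega) huv h1 h2

end SubdivPaper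
end
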